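/- arXiv:1502.06402 — 9 statements merged into one kernel-verified Lean document; each statement's English description precedes it below -/
import Mathlib

section
/- The set Q of admissible moments is open in ℝᵏ: for every b ∈ Q there exists ε' > 0 such that for all ξ ∈ ℝᵏ with |ξ| < ε', we have b + ξ ∈ Q. -/
/-! If `ρ ≥ ε > 0` generates `b`, perturb it to `ρ + ⟪ξ, a⟫`. Orthogonality of `a` to constants
keeps the total mass equal to `1`, orthonormality shifts the moment vector by exactly `ξ`, and
since `‖a‖ ≤ C` a.e. the perturbation stays nonnegative as long as `‖ξ‖ C ≤ ε`. -/

open MeasureTheory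

def probDens {X : Type*} [MeasurableSpace X] (μ : Measure X) : Set (X → ℝ) :=
  {ρ | Integrable ρ μ ∧ 0 ≤ᵐ[μ] ρ ∧ ∫ t, ρ t ∂μ = 1}

/-- The vector of moments of `a` under the density `ρ`. -/
noncomputable def mom {X : Type*} [MeasurableSpace X] (μ : Measure X) {k : ℕ}
    (a : X → EuclideanSpace ℝ (Fin k)) (ρ : X → ℝ) : EuclideanSpace ℝ (Fin k) :=
  (EuclideanSpace.equiv (Fin k) ℝ).symm fun i => ∫ t, a t i * ρ t ∂μ

/-- The set `Q` of admissible moments. -/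
def momentSet {X : Type*} [MeasurableSpace X] (μ : Measure X) {k : ℕ}
    (a : X → EuclideanSpace ℝ (Fin k)) : Set (EuclideanSpace ℝ (Fin k)) :=
  mom μ a '' probDens μ

open scoped InnerProductSpace

theorem EuclideanSpace.integral_apply {X ι 𝕜 : Type*} [MeasurableSpace X] {μ : Measure X}
    [Fintype ι] [RCLike 𝕜] {f : X → EuclideanSpace 𝕜 ι} (hf : Integrable f μ) (i : ι) :
    (∫ t, f t ∂μ) i = ∫ t, f t i ∂μ :=
  ((EuclideanSpace.proj i).integral_comp_comm hf).symm

theorem EuclideanSpace.inner_eq_sum_mul {ι : Type*} [Fintype ι] (x y : EuclideanSpace ℝ ι) :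
    ⟪x, y⟫_ℝ = ∑ j, x j * y j := by
  simp [PiLp.inner_apply, mul_comm]

namespace MeasureTheory

variable {X : Type*} [MeasurableSpace X] {μ : Measure X}

theorem MemLp.exists_ae_norm_le {E : Type*} [NormedAddCommGroup E] {f : X → E}
    (hf : MemLp f ⊤ μ) : ∃ C, 0 ≤ C ∧ ∀ᵐ t ∂μ, ‖f t‖ ≤ C := by
  refine ⟨(eLpNorm f ⊤ μ).toReal, ENNReal.toReal_nonneg, ?_⟩
  filter_upwards [ae_le_eLpNormEssSup (f := f) (μ := μ)] with t ht
  rw [← eLpNorm_exponent_top] at ht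
  simpa using ENNReal.toReal_mono hf.2.ne ht

theorem add_mem_probDens {ρ σ : X → ℝ} {ε : ℝ} (hρ : ρ ∈ probDens μ)
    (hρε : ∀ᵐ t ∂μ, ε ≤ ρ t) (hσ : Integrable σ μ) (hσ₀ : ∫ t, σ t ∂μ = 0)
    (hσε : ∀ᵐ t ∂μ, |σ t| ≤ ε) : ρ + σ ∈ probDens μ := by
  obtain ⟨hρint, -, hρ₁⟩ := hρ
  refine ⟨hρint.add hσ, ?_, ?_⟩
  · filter_upwards [hρε, hσε] with t hρt hσt
    simp only [Pi.zero_apply, Pi.add_apply]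
    linarith [neg_abs_le (σ t)]
  · rw [integral_add' hρint hσ, hρ₁, hσ₀, add_zero]

variable {k : ℕ} {a : X → EuclideanSpace ℝ (Fin k)}

theorem MemLp.integrable_coord_mul (ha : MemLp a ⊤ μ) {f : X → ℝ} (hf : Integrable f μ)
    (i : Fin k) : Integrable (fun t => a t i * f t) μ :=
  hf.mul_of_top_right (ha.continuousLinearMap_comp (EuclideanSpace.proj (𝕜 := ℝ) i))

theorem mom_add (ha : MemLp a ⊤ μ) {ρ σ : X → ℝ} (hρ : Integrable ρ μ)
    (hσ : Integrable σ μ) : mom μ a (ρ + σ) = mom μ a ρ + mom μ a σ := by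
  ext i
  simp only [mom, Pi.add_apply, mul_add, PiLp.add_apply]
  exact integral_add (ha.integrable_coord_mul hρ i) (ha.integrable_coord_mul hσ i)

variable [IsFiniteMeasure μ]

theorem mom_inner_eq_self (ha : MemLp a ⊤ μ)
    (horth : ∀ i j, ∫ t, a t i * a t j ∂μ = if i = j then 1 else 0)
    (ξ : EuclideanSpace ℝ (Fin k)) : mom μ a (fun t => ⟪ξ, a t⟫_ℝ) = ξ := by
  have hcoord (j : Fin k) : Integrable (fun t => a t j) μ :=
    (EuclideanSpace.proj (𝕜 := ℝ) j).integrable_comp (ha.integrable le_top)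
  ext i
  have hexpand : (fun t => a t i * ⟪ξ, a t⟫_ℝ) = fun t => ∑ j, ξ j * (a t i * a t j) := by
    funext t
    rw [EuclideanSpace.inner_eq_sum_mul, Finset.mul_sum]
    exact Finset.sum_congr rfl fun j _ => mul_left_comm _ _ _
  simp only [mom, PiLp.continuousLinearEquiv_symm_apply, hexpand]
  rw [integral_finsetSum _ fun j _ => ((ha.integrable_coord_mul (hcoord j) i).const_mul (ξ j))]
  simp [integral_const_mul, horth]

theorem integral_inner_eq_zero (ha : MemLp a ⊤ μ) (hzero : ∀ i, ∫ t, a t i ∂μ = 0)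
    (ξ : EuclideanSpace ℝ (Fin k)) : ∫ t, ⟪ξ, a t⟫_ℝ ∂μ = 0 := by
  have hmean : ∫ t, a t ∂μ = 0 := by
    ext i
    rw [EuclideanSpace.integral_apply (ha.integrable le_top), hzero, PiLp.zero_apply]
  rw [integral_inner (ha.integrable le_top), hmean, inner_zero_right]

end MeasureTheory

/-- The set `Q` of admissible moments is open: around every `b ∈ Q` there is a ball of
moment vectors still lying in `Q`.  The constraint functions are `L²`-orthonormal and
orthogonal to constants, and (a consequence of the pseudo-Haar property, assumed here)
every `b ∈ Q` is generated by a density which is a.e. bounded below by a positive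
constant. -/
theorem momentSet_isOpen {X : Type*} [MeasurableSpace X]
    (μ : Measure X) [IsFiniteMeasure μ] {k : ℕ}
    (a : X → EuclideanSpace ℝ (Fin k)) (ha : MemLp a ⊤ μ)
    (horth : ∀ i j, ∫ t, a t i * a t j ∂μ = if i = j then 1 else 0)
    (hzero : ∀ i, ∫ t, a t i ∂μ = 0)
    (hgen : ∀ b ∈ momentSet μ a, ∃ ρ ∈ probDens μ, mom μ a ρ = b ∧
      ∃ ε > 0, ∀ᵐ t ∂μ, ε ≤ ρ t) :
    ∀ b ∈ momentSet μ a, ∃ ε' > 0, ∀ ξ : EuclideanSpace ℝ (Fin k),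
      ‖ξ‖ < ε' → b + ξ ∈ momentSet μ a := by
  intro b hb
  obtain ⟨ρ, hρ, rfl, ε, hε, hρε⟩ := hgen b hb
  obtain ⟨C, hC₀, hC⟩ := ha.exists_ae_norm_le
  have hinner (ξ : EuclideanSpace ℝ (Fin k)) : Integrable (fun t => ⟪ξ, a t⟫_ℝ) μ :=
    (ha.integrable le_top).const_inner ξ
  refine ⟨ε / (C + 1), by positivity, fun ξ hξ => ⟨ρ + fun t => ⟪ξ, a t⟫_ℝ, ?_, ?_⟩⟩
  · refine add_mem_probDens hρ hρε (hinner ξ) (integral_inner_eq_zero ha hzero ξ) ?_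
    filter_upwards [hC] with t ht
    calc |⟪ξ, a t⟫_ℝ| ≤ ‖ξ‖ * ‖a t‖ := abs_real_inner_le_norm _ _
      _ ≤ ε / (C + 1) * (C + 1) := by gcongr; linarith
      _ = ε := div_mul_cancel₀ _ (by positivity)
  · rw [mom_add ha hρ.1 (hinner ξ), mom_inner_eq_self ha horth]
end

section
/- Let b ∈ Q, let b₀ ∈ ∂Q be a closest boundary point to b, set u = (b₀−b)/|b₀−b| and ε² = |b₀−b|, and let S_u = ess sup_{t∈X} u·a(t) and E = {t ∈ X : S_u < u·a(t) + ε}. Then S_u − b·u = ε², and every ρ ∈ P(X) with ∫_X a ρ dμ = b satisfies ∫_E ρ dμ ≥ 1 − ε. -/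
/-!
The gap `S_u - b·u = ε²` is just `(b₀ - b)·u = |b₀ - b|` once `b₀·u = S_u`. For the mass bound,
`u·a ≤ S_u` almost everywhere and `u·a ≤ S_u - ε` off `E`, so integrating against `ρ` gives
`S_u - ε² = u·b = ∫ (u·a) ρ ≤ S_u - ε ρ(X \ E)`: this Markov-type estimate yields `ρ(X \ E) ≤ ε`.
-/

open MeasureTheory
open scoped RealInnerProductSpace

section

variable {X : Type*} [MeasurableSpace X] {μ : Measure X}

theorem MeasureTheory.MemLp.ae_le_essSup {g : X → ℝ} (hg : MemLp g ⊤ μ) :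
    ∀ᵐ t ∂μ, g t ≤ essSup g μ := by
  obtain ⟨C, hC⟩ := eLpNormEssSup_lt_top_iff_isBoundedUnder.mp
    (by simpa only [eLpNorm_exponent_top] using hg.eLpNorm_lt_top)
  refine _root_.ae_le_essSup ⟨C, Filter.eventually_map.2 ?_⟩
  filter_upwards [Filter.eventually_map.1 hC] with t ht
  exact (le_abs_self _).trans (NNReal.coe_le_coe.2 ht)

theorem mom_eq_integral_smul {k : ℕ} {a : X → EuclideanSpace ℝ (Fin k)} {ρ : X → ℝ}
    (h : Integrable (fun t => ρ t • a t) μ) : mom μ a ρ = ∫ t, ρ t • a t ∂μ := by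
  ext i
  simpa [mom, mul_comm] using (EuclideanSpace.proj (𝕜 := ℝ) i).integral_comp_comm h

theorem inner_mom {k : ℕ} {a : X → EuclideanSpace ℝ (Fin k)} {ρ : X → ℝ} (ha : MemLp a ⊤ μ)
    (hρ : Integrable ρ μ) (u : EuclideanSpace ℝ (Fin k)) :
    ⟪u, mom μ a ρ⟫ = ∫ t, ⟪u, a t⟫ * ρ t ∂μ := by
  have h : Integrable (fun t => ρ t • a t) μ := hρ.smul_of_top_left ha
  simp_rw [mom_eq_integral_smul h, ← integral_inner h, real_inner_smul_right, mul_comm]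

theorem mul_one_sub_setIntegral_lt_add_le {f ρ : X → ℝ} {S ε : ℝ} (hρ : ρ ∈ probDens μ)
    (hf : AEStronglyMeasurable f μ) (hfρ : Integrable (fun t => f t * ρ t) μ)
    (hfS : ∀ᵐ t ∂μ, f t ≤ S) :
    ε * (1 - ∫ t in {s | S < f s + ε}, ρ t ∂μ) ≤ S - ∫ t, f t * ρ t ∂μ := by
  obtain ⟨hρi, hρ0, hρ1⟩ := hρ
  set E := {s | S < f s + ε}
  have hE : NullMeasurableSet E μ :=
    nullMeasurableSet_lt aemeasurable_const (hf.aemeasurable.add_const ε)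
  have hon : ∫ t in E, f t * ρ t ∂μ ≤ S * ∫ t in E, ρ t ∂μ := by
    rw [← integral_const_mul]
    refine setIntegral_mono_ae_restrict hfρ.integrableOn (hρi.const_mul S).integrableOn
      (ae_restrict_of_ae ?_)
    filter_upwards [hfS, hρ0] with t hft hρt
    exact mul_le_mul_of_nonneg_right hft hρt
  have hoff : ∫ t in Eᶜ, f t * ρ t ∂μ ≤ (S - ε) * ∫ t in Eᶜ, ρ t ∂μ := by
    rw [← integral_const_mul]
    refine setIntegral_mono_ae_restrict hfρ.integrableOn
      (hρi.const_mul (S - ε)).integrableOn ((ae_restrict_iff'₀ hE.compl).2 ?_)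
    filter_upwards [hρ0] with t hρt htE
    have hft : f t + ε ≤ S := not_lt.1 htE
    exact mul_le_mul_of_nonneg_right (by linarith) hρt
  have hsplit_ρ := integral_add_compl₀ hE hρi
  have hsplit_fρ := integral_add_compl₀ hE hfρ
  rw [hρ1] at hsplit_ρ
  rw [← hsplit_fρ, ← hsplit_ρ]
  linear_combination hon + hoff + S * hsplit_ρ

theorem inner_inv_norm_smul_self {E : Type*} [NormedAddCommGroup E] [InnerProductSpace ℝ E]
    (x : E) : ⟪x, ‖x‖⁻¹ • x⟫ = ‖x‖ := by
  rw [real_inner_smul_right, real_inner_self_eq_norm_sq]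
  rcases eq_or_ne ‖x‖ 0 with h | h
  · simp [h]
  · field_simp

end

theorem mass_concentration_near_boundary_general {X : Type*} [MeasurableSpace X]
    (μ : Measure X) {k : ℕ}
    (a : X → EuclideanSpace ℝ (Fin k)) (ha : MemLp a ⊤ μ)
    (b b₀ : EuclideanSpace ℝ (Fin k))
    (ε : ℝ) (hε : 0 < ε) (hε2 : ε ^ 2 = ‖b₀ - b‖)
    (u : EuclideanSpace ℝ (Fin k)) (hu : u = ‖b₀ - b‖⁻¹ • (b₀ - b))
    (hb₀u : ⟪b₀, u⟫ = essSup (fun t => ⟪u, a t⟫) μ) :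
    essSup (fun t => ⟪u, a t⟫) μ - ⟪b, u⟫ = ε ^ 2 ∧
    ∀ ρ ∈ probDens μ, mom μ a ρ = b →
      1 - ε ≤ ∫ t in {s | essSup (fun r => ⟪u, a r⟫) μ < ⟪u, a s⟫ + ε}, ρ t ∂μ := by
  have hgap : essSup (fun t => ⟪u, a t⟫) μ - ⟪b, u⟫ = ε ^ 2 := by
    rw [← hb₀u, ← inner_sub_left, hu, inner_inv_norm_smul_self, hε2]
  refine ⟨hgap, fun ρ hρ hmom => ?_⟩
  have hg : MemLp (fun t => ⟪u, a t⟫) ⊤ μ := ha.const_inner u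
  have hmass := mul_one_sub_setIntegral_lt_add_le (ε := ε) hρ hg.1 (hρ.1.mul_of_top_right hg)
    hg.ae_le_essSup
  rw [← inner_mom ha hρ.1, hmom, real_inner_comm, hgap, sq] at hmass
  linarith [le_of_mul_le_mul_left hmass hε]

/-- Concentration of mass near the boundary: with `b₀` a closest boundary point to
`b ∈ Q`, `u = (b₀ - b)/|b₀ - b|`, `ε² = |b₀ - b|`, `S_u = ess sup u·a` and
`E = {t : S_u < u·a(t) + ε}`, one has `S_u - b·u = ε²`, and every probability density
generating `b` puts mass at least `1 - ε` on `E`. -/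
theorem mass_concentration_near_boundary {X : Type*} [MeasurableSpace X]
    (μ : Measure X) [IsFiniteMeasure μ] {k : ℕ}
    (a : X → EuclideanSpace ℝ (Fin k)) (ha : MemLp a ⊤ μ)
    (b b₀ : EuclideanSpace ℝ (Fin k))
    (hb : b ∈ momentSet μ a) (hb₀ : b₀ ∈ frontier (momentSet μ a))
    (hmin : ∀ b' ∈ frontier (momentSet μ a), ‖b₀ - b‖ ≤ ‖b' - b‖)
    (ε : ℝ) (hε : 0 < ε) (hε2 : ε ^ 2 = ‖b₀ - b‖)
    (u : EuclideanSpace ℝ (Fin k)) (hu : u = ‖b₀ - b‖⁻¹ • (b₀ - b))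
    (hb₀u : ⟪b₀, u⟫ = essSup (fun t => ⟪u, a t⟫) μ) :
    essSup (fun t => ⟪u, a t⟫) μ - ⟪b, u⟫ = ε ^ 2 ∧
    ∀ ρ ∈ probDens μ, mom μ a ρ = b →
      1 - ε ≤ ∫ t in {s | essSup (fun r => ⟪u, a r⟫) μ < ⟪u, a s⟫ + ε}, ρ t ∂μ :=
  mass_concentration_near_boundary_general μ a ha b b₀ ε hε hε2 u hu hb₀u
end

section
/- For u ∈ S^{k-1} and ε > 0 define E_ε^u = {t ∈ X : ess sup_{s∈X} u·a(s) < u·a(t) + ε}. Then μ(E_ε^u) → 0 as ε → 0, uniformly in u: for every γ > 0 there exists δ > 0 such that for all u ∈ S^{k-1} and all 0 < ε < δ, μ(E_ε^u) < γ. -/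
/-!
For a single unit vector `u`, the sets `E_ε^u` decrease as `ε ↓ 0` to `{t : u·a(t) ≥ ess sup u·a}`;
`u·a` exceeds its essential supremum only on a null set and attains it only on a null set by the
pseudo-Haar hypothesis, so `μ(E_ε^u) → 0` by continuity of the finite measure from above. Uniformity comes from compactness of the sphere: if `‖a‖ ≤ C` a.e. then
`|u·a - v·a| ≤ C‖u - v‖` a.e., hence `E_ε^u ⊆ E_{ε + 2C‖u - v‖}^v` up to a null set.
-/

open MeasureTheory Filter Topology Set
open scoped RealInnerProductSpace ENNReal

namespace MeasureTheory

variable {X : Type*} [MeasurableSpace X] {μ : Measure X}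

/-- The paper's `E_ε^u` is `nearMaxSet μ (fun t => ⟪u, a t⟫) ε`. -/
def nearMaxSet (μ : Measure X) (f : X → ℝ) (ε : ℝ) : Set X :=
  {t | essSup f μ < f t + ε}

theorem iInter_nearMaxSet (μ : Measure X) (f : X → ℝ) :
    ⋂ ε > 0, nearMaxSet μ f ε = {t | essSup f μ ≤ f t} := by
  ext t
  simp only [nearMaxSet, mem_iInter, mem_ofPred_eq]
  refine ⟨fun h => le_of_forall_pos_lt_add fun ε hε => ?_, fun h ε hε => by linarith⟩
  linarith [h ε hε]

theorem tendsto_measure_nearMaxSet [IsFiniteMeasure μ] {f : X → ℝ} (hf : AEMeasurable f μ)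
    (hbdd : IsBoundedUnder (· ≤ ·) (ae μ) f) (hmax : μ {t | f t = essSup f μ} = 0) :
    Tendsto (fun ε => μ (nearMaxSet μ f ε)) (𝓝[>] 0) (𝓝 0) := by
  have hnull : μ {t | essSup f μ ≤ f t} = 0 := by
    refine measure_mono_null (fun t ht => ?_) (measure_union_null hmax (meas_essSup_lt hbdd))
    exact (eq_or_lt_of_le ht).imp Eq.symm id
  have h := tendsto_measure_biInter_gt (μ := μ) (s := nearMaxSet μ f) (a := 0)
    (fun _ _ => nullMeasurableSet_lt aemeasurable_const (hf.add aemeasurable_const))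
    (fun _ _ _ hij _ ht => by simp only [nearMaxSet, mem_ofPred_eq] at ht ⊢; linarith)
    ⟨1, one_pos, measure_ne_top μ _⟩
  rwa [iInter_nearMaxSet, hnull] at h

theorem measure_nearMaxSet_le_of_ae_abs_sub_le {f g : X → ℝ} {c ε ε' : ℝ}
    (hf : IsBoundedUnder (· ≤ ·) (ae μ) f) (hg : IsBoundedUnder (· ≥ ·) (ae μ) g)
    (hfg : ∀ᵐ t ∂μ, |f t - g t| ≤ c) (hεε' : ε + 2 * c ≤ ε') :
    μ (nearMaxSet μ f ε) ≤ μ (nearMaxSet μ g ε') := by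
  rcases (ae μ).eq_or_neBot with hμ | _
  · simp [ae_eq_bot.1 hμ]
  have hg_le : essSup g μ ≤ essSup f μ + c := by
    refine limsup_le_of_le hg.isCoboundedUnder_le ?_
    filter_upwards [ae_le_essSup hf, hfg] with t hft hct
    linarith [neg_abs_le (f t - g t)]
  refine measure_mono_ae ?_
  filter_upwards [hfg] with t hct ht
  change essSup f μ < f t + ε at ht
  change essSup g μ < g t + ε'
  linarith [le_abs_self (f t - g t)]

end MeasureTheory

section

variable {X E : Type*} [MeasurableSpace X] {μ : Measure X} [NormedAddCommGroup E]
  [InnerProductSpace ℝ E] {a : X → E} {C : ℝ}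

theorem ae_abs_inner_sub_inner_le (hC : ∀ᵐ t ∂μ, ‖a t‖ ≤ C) (u v : E) :
    ∀ᵐ t ∂μ, |⟪u, a t⟫ - ⟪v, a t⟫| ≤ C * ‖u - v‖ := by
  filter_upwards [hC] with t ht
  calc |⟪u, a t⟫ - ⟪v, a t⟫| = |⟪u - v, a t⟫| := by rw [inner_sub_left]
    _ ≤ ‖u - v‖ * ‖a t‖ := abs_real_inner_le_norm _ _
    _ ≤ C * ‖u - v‖ := by rw [mul_comm]; exact mul_le_mul_of_nonneg_right ht (norm_nonneg _)

theorem isBoundedUnder_abs_inner (hC : ∀ᵐ t ∂μ, ‖a t‖ ≤ C) (u : E) :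
    IsBoundedUnder (· ≤ ·) (ae μ) fun t => |⟪u, a t⟫| :=
  isBoundedUnder_of_eventually_le <| hC.mono fun _ ht =>
    (abs_real_inner_le_norm _ _).trans (mul_le_mul_of_nonneg_left ht (norm_nonneg u))

theorem eventually_measure_nearMaxSet_inner_lt [IsFiniteMeasure μ] (ha : AEStronglyMeasurable a μ)
    (hC : ∀ᵐ t ∂μ, ‖a t‖ ≤ C) {v : E} (hv : μ {t | ⟪v, a t⟫ = essSup (fun s => ⟪v, a s⟫) μ} = 0)
    {γ : ℝ≥0∞} (hγ : 0 < γ) :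
    ∀ᶠ p : ℝ × E in 𝓝 (0, v), 0 < p.1 → μ (nearMaxSet μ (fun s => ⟪p.2, a s⟫) p.1) < γ := by
  have hbdd (u : E) := isBoundedUnder_le_abs.1 (isBoundedUnder_abs_inner hC u)
  have hmeas : AEMeasurable (fun s => ⟪v, a s⟫) μ :=
    (aestronglyMeasurable_const.inner ha).aemeasurable
  obtain ⟨η, hη, hηpos⟩ := (((tendsto_measure_nearMaxSet hmeas (hbdd v).1 hv).eventually
    (gt_mem_nhds hγ)).and self_mem_nhdsWithin).exists
  have hcont : ContinuousAt (fun p : ℝ × E => p.1 + 2 * (C * ‖p.2 - v‖)) (0, v) := by fun_prop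
  filter_upwards [hcont.eventually_lt continuousAt_const (by simpa using hηpos)] with p hp _
  exact (measure_nearMaxSet_le_of_ae_abs_sub_le (hbdd p.2).1 (hbdd v).2
    (ae_abs_inner_sub_inner_le hC p.2 v) hp.le).trans_lt hη

end

/-- Uniform smallness of the near-maximal sets: with
`E_ε^u = {t : ess sup_s u·a(s) < u·a(t) + ε}`, the measure `μ(E_ε^u)` tends to `0` as
`ε → 0`, uniformly in the unit vector `u`.  The pseudo-Haar property enters through the
hypothesis that for each `u` the set where `u·a` attains its essential supremum is null. -/
theorem measure_near_max_set_tendsto_zero_uniformly {X : Type*} [MeasurableSpace X]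
    (μ : Measure X) [IsFiniteMeasure μ] {k : ℕ}
    (a : X → EuclideanSpace ℝ (Fin k)) (ha : MemLp a ⊤ μ)
    (hps : ∀ u : EuclideanSpace ℝ (Fin k), ‖u‖ = 1 →
      μ {t | ⟪u, a t⟫ = essSup (fun s => ⟪u, a s⟫) μ} = 0) :
    ∀ γ : ℝ≥0∞, 0 < γ → ∃ δ : ℝ, 0 < δ ∧
      ∀ u : EuclideanSpace ℝ (Fin k), ‖u‖ = 1 → ∀ ε : ℝ, 0 < ε → ε < δ →
        μ {t | essSup (fun s => ⟪u, a s⟫) μ < ⟪u, a t⟫ + ε} < γ := by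
  intro γ hγ
  have hlocal (v) (hv : v ∈ Metric.sphere (0 : EuclideanSpace ℝ (Fin k)) 1) :=
    eventually_measure_nearMaxSet_inner_lt ha.aestronglyMeasurable
      (ae_le_lpNorm_exponent_top ha) (hps v (mem_sphere_zero_iff_norm.1 hv)) hγ
  obtain ⟨δ, hδ, hδu⟩ := Metric.eventually_nhds_iff.1
    ((isCompact_sphere (0 : EuclideanSpace ℝ (Fin k)) 1).eventually_forall_of_forall_eventually
      (P := fun ε u => 0 < ε → μ (nearMaxSet μ (fun s => ⟪u, a s⟫) ε) < γ) hlocal)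
  refine ⟨δ, hδ, fun u hu ε hε hεδ => ?_⟩
  exact hδu (by rwa [Real.dist_0_eq_abs, abs_of_pos hε]) u (mem_sphere_zero_iff_norm.2 hu) hε
end

section
/- Let b ∈ Q with closest boundary point b₀ ∈ ∂Q, u = (b₀−b)/|b₀−b|, ε² = |b₀−b|, and E = E_ε^u = {t : S_u < u·a(t) + ε}. There exists c > 0 (independent of b) such that whenever ε < c, ψ_s(b) ≥ μ(E) φ((1−ε)/μ(E)) + μ(X∖E) φ(ε/μ(X∖E)). -/
open MeasureTheory Filter
open scoped RealInnerProductSpace ENNReal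

/-! Write `ρ` for the optimal density of `b`. Jensen's inequality on `E` and on `Eᶜ` bounds
`ψ b = ∫ φ ∘ ρ` below by `μ(E) φ(m) + μ(Eᶜ) φ(m')`, where `m` and `m'` are the means of `ρ` on
`E` and on `Eᶜ`. Mass concentration gives `m ≥ (1 - ε) / μ(E)` and `m' ≤ ε / μ(Eᶜ)`. Since
`μ(E) → 0` uniformly in `u`, for small `ε` both of these bounds lie where `φ` is monotone in the
right direction. -/

open Set

lemma ConvexOn.add_mul_sub_le_of_hasDerivAt {S : Set ℝ} {f : ℝ → ℝ} {f' x y : ℝ}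
    (hf : ConvexOn ℝ S f) (hx : x ∈ S) (hy : y ∈ S) (hd : HasDerivAt f f' x) :
    f x + f' * (y - x) ≤ f y := by
  rcases lt_trichotomy y x with hyx | rfl | hxy
  · have h := hf.slope_le_of_hasDerivAt hy hx hyx hd
    rw [slope_def_field, div_le_iff₀ (sub_pos.mpr hyx)] at h
    linarith
  · simp
  · have h := hf.le_slope_of_hasDerivAt hx hy hxy hd
    rw [slope_def_field, le_div_iff₀ (sub_pos.mpr hxy)] at h
    linarith

/-- Jensen's inequality without continuity of `φ` at `0`: the tangent line at the mean does the
work, and a nonnegative function of mean zero vanishes a.e. -/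
lemma ConvexOn.mul_map_integral_div_le_integral {X : Type*} [MeasurableSpace X]
    {ν : Measure X} [IsFiniteMeasure ν] {φ φ' : ℝ → ℝ} (hφ : ConvexOn ℝ (Ici 0) φ)
    (hder : ∀ x ∈ Ioi (0 : ℝ), HasDerivAt φ (φ' x) x) {f : X → ℝ} (hf : Integrable f ν)
    (hf0 : 0 ≤ᵐ[ν] f) (hφf : Integrable (fun t => φ (f t)) ν) :
    ν.real univ * φ ((∫ t, f t ∂ν) / ν.real univ) ≤ ∫ t, φ (f t) ∂ν := by
  rcases (integral_nonneg_of_ae hf0).eq_or_lt with hI | hI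
  · have hf_ae : f =ᵐ[ν] 0 := (integral_eq_zero_iff_of_nonneg_ae hf0 hf).mp hI.symm
    have hφf_ae : (fun t => φ (f t)) =ᵐ[ν] fun _ => φ 0 := hf_ae.mono fun t ht => by simp [ht]
    rw [← hI, zero_div, integral_congr_ae hφf_ae, integral_const, smul_eq_mul]
  have hV : 0 < ν.real univ := by
    refine measureReal_nonneg.lt_of_ne fun hV => hI.ne' ?_
    rw [eq_comm, measureReal_eq_zero_iff, Measure.measure_univ_eq_zero] at hV
    simp [hV]
  set m := (∫ t, f t ∂ν) / ν.real univ
  have hm : 0 < m := div_pos hI hV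
  have hlin : Integrable (fun t => φ' m * (f t - m)) ν :=
    (hf.sub (integrable_const _)).const_mul _
  have htangent : Integrable (fun t => φ m + φ' m * (f t - m)) ν := (integrable_const _).add hlin
  calc ν.real univ * φ m = ∫ t, (φ m + φ' m * (f t - m)) ∂ν := by
        rw [integral_add (integrable_const _) hlin, integral_const_mul,
          integral_sub hf (integrable_const _)]
        simp only [integral_const, smul_eq_mul, m]
        field_simp
        ring
    _ ≤ ∫ t, φ (f t) ∂ν := integral_mono_ae htangent hφf <| hf0.mono fun t ht =>
        hφ.add_mul_sub_le_of_hasDerivAt (mem_Ici.mpr hm.le) ht (hder m hm)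

lemma ConvexOn.antitoneOn_Icc_of_antitoneOn_Ioc {φ : ℝ → ℝ} {a b : ℝ}
    (hφ : ConvexOn ℝ (Ici a) φ) (hanti : AntitoneOn φ (Ioc a b)) : AntitoneOn φ (Icc a b) := by
  intro p hp q hq hpq
  rcases hp.1.eq_or_lt with rfl | hap
  · rcases hpq.eq_or_lt with rfl | hpq
    · rfl
    have hmid := hφ.2 (mem_Ici.mpr le_rfl) hq.1 (by norm_num : (0 : ℝ) ≤ 1 / 2)
      (by norm_num : (0 : ℝ) ≤ 1 / 2) (by norm_num)
    simp only [smul_eq_mul] at hmid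
    have hq_le_mid : φ q ≤ φ (1 / 2 * a + 1 / 2 * q) :=
      hanti ⟨by linarith, by linarith [hq.2]⟩ ⟨hpq, hq.2⟩ (by linarith)
    linarith
  · exact hanti ⟨hap, hp.2⟩ ⟨hap.trans_le hpq, hq.2⟩ hpq

lemma measure_ne_zero_of_mem_probDens {X : Type*} [MeasurableSpace X] {μ : Measure X}
    {ρ : X → ℝ} (hρ : ρ ∈ probDens μ) : μ ≠ 0 := by
  rintro rfl
  simpa using hρ.2.2

lemma measureReal_mul_map_add_compl_le_integral {X : Type*} [MeasurableSpace X]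
    {μ : Measure X} [IsFiniteMeasure μ] {φ φ' : ℝ → ℝ} (hφ : ConvexOn ℝ (Ici 0) φ)
    (hder : ∀ x ∈ Ioi (0 : ℝ), HasDerivAt φ (φ' x) x) {ρ : X → ℝ} (hρ : ρ ∈ probDens μ)
    (hφρ : Integrable (fun t => φ (ρ t)) μ) {s : Set X} (hs : NullMeasurableSet s μ)
    {ε x₀ x₁ : ℝ} (hmass : 1 - ε ≤ ∫ t in s, ρ t ∂μ)
    (hmono : MonotoneOn φ (Ici x₀)) (hx₀ : x₀ ≤ (1 - ε) / μ.real s)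
    (hanti : AntitoneOn φ (Icc 0 x₁)) (hx₁ : ε / μ.real sᶜ ≤ x₁) :
    μ.real s * φ ((1 - ε) / μ.real s) + μ.real sᶜ * φ (ε / μ.real sᶜ) ≤ ∫ t, φ (ρ t) ∂μ := by
  obtain ⟨hρi, hρ0, hρ1⟩ := hρ
  have hjensen (r : Set X) :
      μ.real r * φ ((∫ t in r, ρ t ∂μ) / μ.real r) ≤ ∫ t in r, φ (ρ t) ∂μ := by
    simpa using hφ.mul_map_integral_div_le_integral hder hρi.restrict
      (ae_restrict_of_ae hρ0) hφρ.restrict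
  have hmean_s : (1 - ε) / μ.real s ≤ (∫ t in s, ρ t ∂μ) / μ.real s :=
    div_le_div_of_nonneg_right hmass measureReal_nonneg
  have hmean_c : (∫ t in sᶜ, ρ t ∂μ) / μ.real sᶜ ≤ ε / μ.real sᶜ := by
    refine div_le_div_of_nonneg_right ?_ measureReal_nonneg
    linarith [integral_add_compl₀ hs hρi]
  have hmean_c0 : 0 ≤ (∫ t in sᶜ, ρ t ∂μ) / μ.real sᶜ :=
    div_nonneg (integral_nonneg_of_ae (ae_restrict_of_ae hρ0)) measureReal_nonneg
  rw [← integral_add_compl₀ hs hφρ]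
  gcongr ?_ + ?_
  · calc μ.real s * φ ((1 - ε) / μ.real s)
        ≤ μ.real s * φ ((∫ t in s, ρ t ∂μ) / μ.real s) :=
          mul_le_mul_of_nonneg_left (hmono hx₀ (hx₀.trans hmean_s) hmean_s) measureReal_nonneg
      _ ≤ ∫ t in s, φ (ρ t) ∂μ := hjensen s
  · calc μ.real sᶜ * φ (ε / μ.real sᶜ)
        ≤ μ.real sᶜ * φ ((∫ t in sᶜ, ρ t ∂μ) / μ.real sᶜ) :=
          mul_le_mul_of_nonneg_left
            (hanti ⟨hmean_c0, hmean_c.trans hx₁⟩ ⟨hmean_c0.trans hmean_c, hx₁⟩ hmean_c)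
            measureReal_nonneg
      _ ≤ ∫ t in sᶜ, φ (ρ t) ∂μ := hjensen sᶜ

theorem singularPotential_lower_bound_general {X : Type*} [MeasurableSpace X]
    (μ : Measure X) [IsFiniteMeasure μ] {k : ℕ}
    (a : X → EuclideanSpace ℝ (Fin k)) (ha : MemLp a ⊤ μ)
    (φ φ' : ℝ → ℝ)
    (hconv0 : ConvexOn ℝ (Set.Ici 0) φ)
    (hder : ∀ x ∈ Set.Ioi (0:ℝ), HasDerivAt φ (φ' x) x)
    -- φ is increasing for sufficiently large argument and decreasing for small argument
    (hφinc : ∃ x₀ : ℝ, 0 < x₀ ∧ MonotoneOn φ (Set.Ici x₀))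
    (hφdec : ∃ x₁ : ℝ, 0 < x₁ ∧ AntitoneOn φ (Set.Ioc 0 x₁))
    -- the singular potential and its optimal densities
    (ψ : EuclideanSpace ℝ (Fin k) → ℝ) (ρmin : EuclideanSpace ℝ (Fin k) → X → ℝ)
    (hρP : ∀ b ∈ momentSet μ a, ρmin b ∈ probDens μ)
    (hρgen : ∀ b ∈ momentSet μ a, mom μ a (ρmin b) = b)
    (hρint : ∀ b ∈ momentSet μ a, Integrable (fun t => φ (ρmin b t)) μ)
    (hψ : ∀ b ∈ momentSet μ a, ψ b = ∫ t, φ (ρmin b t) ∂μ)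
    -- assumed: mass concentration near the boundary (Prop. 2.5 of the paper)
    (hconc : ∀ b ∈ momentSet μ a, ∀ b₀ ∈ frontier (momentSet μ a),
      (∀ b' ∈ frontier (momentSet μ a), ‖b₀ - b‖ ≤ ‖b' - b‖) →
      ∀ ε : ℝ, 0 < ε → ε ^ 2 = ‖b₀ - b‖ →
      ∀ ρ ∈ probDens μ, mom μ a ρ = b →
        1 - ε ≤ ∫ t in {s | essSup (fun r => ⟪‖b₀ - b‖⁻¹ • (b₀ - b), a r⟫) μ <
            ⟪‖b₀ - b‖⁻¹ • (b₀ - b), a s⟫ + ε}, ρ t ∂μ)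
    -- assumed: μ(E_ε^u) → 0 uniformly in u
    (huni : ∀ γ : ℝ≥0∞, 0 < γ → ∃ δ : ℝ, 0 < δ ∧
      ∀ u : EuclideanSpace ℝ (Fin k), ‖u‖ = 1 → ∀ ε : ℝ, 0 < ε → ε < δ →
        μ {t | essSup (fun s => ⟪u, a s⟫) μ < ⟪u, a t⟫ + ε} < γ) :
    ∃ c : ℝ, 0 < c ∧ ∀ b ∈ momentSet μ a, ∀ b₀ ∈ frontier (momentSet μ a),
      (∀ b' ∈ frontier (momentSet μ a), ‖b₀ - b‖ ≤ ‖b' - b‖) →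
      ∀ ε : ℝ, 0 < ε → ε ^ 2 = ‖b₀ - b‖ → ε < c →
      let u := ‖b₀ - b‖⁻¹ • (b₀ - b)
      let E := {t | essSup (fun s => ⟪u, a s⟫) μ < ⟪u, a t⟫ + ε}
      (μ E).toReal * φ ((1 - ε) / (μ E).toReal) +
          (μ Eᶜ).toReal * φ (ε / (μ Eᶜ).toReal) ≤ ψ b := by
  obtain ⟨x₀, hx₀, hmono⟩ := hφinc
  obtain ⟨x₁, hx₁, hanti⟩ := hφdec
  by_cases hμ : μ = 0
  · exact ⟨1, one_pos, fun b ⟨ρ, hρ, _⟩ => absurd hμ (measure_ne_zero_of_mem_probDens hρ)⟩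
  have : NeZero μ := ⟨hμ⟩
  have hM : 0 < μ.real univ := measureReal_univ_pos
  -- `E` must be small enough that `(1 - ε) / μ(E) ≥ x₀` and `μ(Eᶜ) ≥ μ(X) / 2`
  obtain ⟨δ, hδ, hsmall⟩ := huni (ENNReal.ofReal (min (1 / (2 * x₀)) (μ.real univ / 2)))
    (ENNReal.ofReal_pos.mpr (by positivity))
  refine ⟨min δ (min (1 / 2) (x₁ * μ.real univ / 2)), by positivity, ?_⟩
  intro b hb b₀ hb₀ hclosest ε hε hε2 hεc u E
  simp only [lt_min_iff] at hεc
  obtain ⟨hεδ, hε_half, hεx₁⟩ := hεc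
  have hu : ‖u‖ = 1 := by
    have hbb : ‖b₀ - b‖ ≠ 0 := by rw [← hε2]; positivity
    rw [norm_smul, norm_inv, norm_norm, inv_mul_cancel₀ hbb]
  have hE : NullMeasurableSet E μ := by
    have := ha.1.aemeasurable
    exact nullMeasurableSet_lt aemeasurable_const (by fun_prop)
  have hmass := hconc b hb b₀ hb₀ hclosest ε hε hε2 (ρmin b) (hρP b hb) (hρgen b hb)
  have hEsmall : μ.real E < min (1 / (2 * x₀)) (μ.real univ / 2) :=
    ENNReal.toReal_lt_of_lt_ofReal (hsmall u hu ε hε hεδ)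
  rw [lt_min_iff, lt_div_iff₀ (by positivity)] at hEsmall
  have hEpos : 0 < μ.real E := by
    refine measureReal_nonneg.lt_of_ne fun h => ?_
    rw [eq_comm, measureReal_eq_zero_iff] at h
    rw [Measure.restrict_eq_zero.mpr h, integral_zero_measure] at hmass
    linarith
  have hEc := measureReal_add_measureReal_compl₀ hE
  rw [hψ b hb]
  refine measureReal_mul_map_add_compl_le_integral hconv0 hder (hρP b hb) (hρint b hb) hE
    hmass hmono ?_ (hconv0.antitoneOn_Icc_of_antitoneOn_Ioc hanti) ?_
  · rw [le_div_iff₀ hEpos]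
    nlinarith
  · rw [div_le_iff₀ (by linarith)]
    nlinarith

/-- Lower bound for the singular potential near the boundary of `Q`: there is a constant
`c > 0`, independent of `b`, such that whenever `b₀` is a closest boundary point to
`b ∈ Q`, `u = (b₀-b)/|b₀-b|`, `ε² = |b₀-b| < c²` and `E = {t : S_u < u·a(t) + ε}`,
`ψ_s(b) ≥ μ(E) φ((1-ε)/μ(E)) + μ(X∖E) φ(ε/μ(X∖E))`. -/
theorem singularPotential_lower_bound {X : Type*} [MeasurableSpace X]
    (μ : Measure X) [IsFiniteMeasure μ] {k : ℕ}
    (a : X → EuclideanSpace ℝ (Fin k)) (ha : MemLp a ⊤ μ)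
    (φ φ' : ℝ → ℝ)
    (hconv : StrictConvexOn ℝ (Set.Ioi 0) φ) (hconv0 : ConvexOn ℝ (Set.Ici 0) φ)
    (hder : ∀ x ∈ Set.Ioi (0:ℝ), HasDerivAt φ (φ' x) x)
    (hderc : ContinuousOn φ' (Set.Ioi 0))
    (hsuper : Tendsto (fun x => φ x / x) atTop atTop)
    (hder0 : Tendsto φ' (nhdsWithin 0 (Set.Ioi 0)) atBot)
    -- φ is increasing for sufficiently large argument and decreasing for small argument
    (hφinc : ∃ x₀ : ℝ, 0 < x₀ ∧ MonotoneOn φ (Set.Ici x₀))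
    (hφdec : ∃ x₁ : ℝ, 0 < x₁ ∧ AntitoneOn φ (Set.Ioc 0 x₁))
    -- the singular potential and its optimal densities
    (ψ : EuclideanSpace ℝ (Fin k) → ℝ) (ρmin : EuclideanSpace ℝ (Fin k) → X → ℝ)
    (hρP : ∀ b ∈ momentSet μ a, ρmin b ∈ probDens μ)
    (hρgen : ∀ b ∈ momentSet μ a, mom μ a (ρmin b) = b)
    (hρint : ∀ b ∈ momentSet μ a, Integrable (fun t => φ (ρmin b t)) μ)
    (hψ : ∀ b ∈ momentSet μ a, ψ b = ∫ t, φ (ρmin b t) ∂μ)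
    -- assumed: mass concentration near the boundary (Prop. 2.5 of the paper)
    (hconc : ∀ b ∈ momentSet μ a, ∀ b₀ ∈ frontier (momentSet μ a),
      (∀ b' ∈ frontier (momentSet μ a), ‖b₀ - b‖ ≤ ‖b' - b‖) →
      ∀ ε : ℝ, 0 < ε → ε ^ 2 = ‖b₀ - b‖ →
      ∀ ρ ∈ probDens μ, mom μ a ρ = b →
        1 - ε ≤ ∫ t in {s | essSup (fun r => ⟪‖b₀ - b‖⁻¹ • (b₀ - b), a r⟫) μ <
            ⟪‖b₀ - b‖⁻¹ • (b₀ - b), a s⟫ + ε}, ρ t ∂μ)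
    -- assumed: μ(E_ε^u) → 0 uniformly in u
    (huni : ∀ γ : ℝ≥0∞, 0 < γ → ∃ δ : ℝ, 0 < δ ∧
      ∀ u : EuclideanSpace ℝ (Fin k), ‖u‖ = 1 → ∀ ε : ℝ, 0 < ε → ε < δ →
        μ {t | essSup (fun s => ⟪u, a s⟫) μ < ⟪u, a t⟫ + ε} < γ) :
    ∃ c : ℝ, 0 < c ∧ ∀ b ∈ momentSet μ a, ∀ b₀ ∈ frontier (momentSet μ a),
      (∀ b' ∈ frontier (momentSet μ a), ‖b₀ - b‖ ≤ ‖b' - b‖) →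
      ∀ ε : ℝ, 0 < ε → ε ^ 2 = ‖b₀ - b‖ → ε < c →
      let u := ‖b₀ - b‖⁻¹ • (b₀ - b)
      let E := {t | essSup (fun s => ⟪u, a s⟫) μ < ⟪u, a t⟫ + ε}
      (μ E).toReal * φ ((1 - ε) / (μ E).toReal) +
          (μ Eᶜ).toReal * φ (ε / (μ Eᶜ).toReal) ≤ ψ b :=
  singularPotential_lower_bound_general μ a ha φ φ' hconv0 hder hφinc hφdec ψ ρmin hρP hρgen hρint
    hψ hconc huni
end

section
/- Suppose φ is entropy-like, C² on (0,∞) with φ'' > 0 everywhere. For (α,λ) ∈ ℝ × ℝᵏ define h(α,λ) = ∫_X (1, a(t)) (φ')^{-1}(α + λ·a(t)) dμ(t) ∈ ℝ^{k+1}. Then the Jacobian matrix ∂h/∂(α,λ) = ∫_X (1,a(t)) ⊗ (1,a(t)) [φ''((φ')^{-1}(α+λ·a(t)))]^{-1} dμ(t) is invertible (positive definite) at every (α,λ). -/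
/-!
Writing the Jacobian as the weighted Gram matrix `G i j = ∫ vᵢ vⱼ w` of `v = (1, a)` with the
weight `w = 1 / φ''(g(α + λ·a)) > 0`, its quadratic form is `ξᵀ G ξ = ∫ (ξ·v)² w ≥ 0`.
If this vanishes then `ξ·v = 0` a.e., and the pseudo-Haar property gives `ξ = 0`.
-/

open MeasureTheory

/-- The constraint vector `(1, a(t))` augmented by the constant function `1`. -/
noncomputable def aug {X : Type*} {k : ℕ} (a : X → EuclideanSpace ℝ (Fin k)) (t : X) :
    Fin (k + 1) → ℝ :=
  Fin.cons 1 fun i => a t i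

namespace Matrix

variable {X ι : Type*} [MeasurableSpace X]

noncomputable def weightedGram (μ : Measure X) (v : X → ι → ℝ) (w : X → ℝ) : Matrix ι ι ℝ :=
  of fun i j => ∫ t, v t i * v t j * w t ∂μ

lemma isHermitian_weightedGram (μ : Measure X) (v : X → ι → ℝ) (w : X → ℝ) :
    (weightedGram μ v w).IsHermitian := by
  ext i j
  simp only [weightedGram, conjTranspose_apply, of_apply, star_trivial, mul_comm (v _ j)]

variable [Fintype ι]

lemma dotProduct_mulVec_eq_sum (A : Matrix ι ι ℝ) (x : ι → ℝ) :
    x ⬝ᵥ A *ᵥ x = ∑ i, ∑ j, x i * x j * A i j := by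
  simp only [dotProduct, mulVec, Finset.mul_sum]
  exact Finset.sum_congr rfl fun i _ => Finset.sum_congr rfl fun j _ => by ring

lemma sq_dotProduct_mul_eq_sum (x u : ι → ℝ) (c : ℝ) :
    (x ⬝ᵥ u) ^ 2 * c = ∑ i, ∑ j, x i * x j * (u i * u j * c) := by
  rw [sq, dotProduct, Finset.sum_mul_sum, Finset.sum_mul]
  simp only [Finset.sum_mul]
  exact Finset.sum_congr rfl fun i _ => Finset.sum_congr rfl fun j _ => by ring

variable {μ : Measure X} {v : X → ι → ℝ} {w : X → ℝ}

lemma integrable_sq_dotProduct_mul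
    (hint : ∀ i j, Integrable (fun t => v t i * v t j * w t) μ) (x : ι → ℝ) :
    Integrable (fun t => (x ⬝ᵥ v t) ^ 2 * w t) μ := by
  simp_rw [sq_dotProduct_mul_eq_sum]
  exact integrable_finsetSum _ fun i _ =>
    integrable_finsetSum _ fun j _ => (hint i j).const_mul _

lemma dotProduct_weightedGram_mulVec
    (hint : ∀ i j, Integrable (fun t => v t i * v t j * w t) μ) (x : ι → ℝ) :
    x ⬝ᵥ weightedGram μ v w *ᵥ x = ∫ t, (x ⬝ᵥ v t) ^ 2 * w t ∂μ := by
  simp_rw [dotProduct_mulVec_eq_sum, sq_dotProduct_mul_eq_sum, weightedGram, of_apply,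
    ← integral_const_mul]
  rw [integral_finsetSum _ fun i _ =>
    integrable_finsetSum _ fun j _ => (hint i j).const_mul _]
  exact Finset.sum_congr rfl fun i _ =>
    (integral_finsetSum _ fun j _ => (hint i j).const_mul _).symm

theorem posDef_weightedGram (hw : ∀ᵐ t ∂μ, 0 < w t)
    (hint : ∀ i j, Integrable (fun t => v t i * v t j * w t) μ)
    (hv : ∀ ξ : ι → ℝ, (∀ᵐ t ∂μ, ξ ⬝ᵥ v t = 0) → ξ = 0) :
    (weightedGram μ v w).PosDef := by
  refine posDef_iff_dotProduct_mulVec.2 ⟨isHermitian_weightedGram μ v w, fun x hx => ?_⟩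
  rw [star_trivial, dotProduct_weightedGram_mulVec hint]
  have hnonneg : 0 ≤ᵐ[μ] fun t => (x ⬝ᵥ v t) ^ 2 * w t := by
    filter_upwards [hw] with t ht using mul_nonneg (sq_nonneg _) ht.le
  refine (integral_nonneg_of_ae hnonneg).lt_of_ne fun h => hx (hv x ?_)
  have hzero := (integral_eq_zero_iff_of_nonneg_ae hnonneg
    (integrable_sq_dotProduct_mul hint x)).1 h.symm
  filter_upwards [hzero, hw] with t ht hwt
  exact pow_eq_zero_iff two_ne_zero |>.1 <| (mul_eq_zero.1 ht).resolve_right hwt.ne'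

end Matrix

theorem dual_jacobian_posDef_general {X : Type*} [MeasurableSpace X]
    (μ : Measure X) {k : ℕ}
    (a : X → EuclideanSpace ℝ (Fin k))
    (φ' φ'' g : ℝ → ℝ)
    (hpos : ∀ x ∈ Set.Ioi (0:ℝ), 0 < φ'' x)
    (hg : ∀ y : ℝ, g y ∈ Set.Ioi (0:ℝ) ∧ φ' (g y) = y)
    (hph : ∀ ξ : Fin (k + 1) → ℝ,
      (∀ᵐ t ∂μ, ∑ i, ξ i * aug a t i = 0) → ξ = 0)
    (α : ℝ) (lam : Fin k → ℝ)
    (M : Matrix (Fin (k + 1)) (Fin (k + 1)) ℝ)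
    (hM : ∀ i j, M i j =
      ∫ t, aug a t i * aug a t j * (φ'' (g (α + ∑ i', lam i' * a t i')))⁻¹ ∂μ)
    (hint : ∀ i j, Integrable
      (fun t => aug a t i * aug a t j * (φ'' (g (α + ∑ i', lam i' * a t i')))⁻¹) μ) :
    M.PosDef := by
  obtain rfl : M = Matrix.weightedGram μ (aug a)
      fun t => (φ'' (g (α + ∑ i', lam i' * a t i')))⁻¹ := Matrix.ext hM
  exact Matrix.posDef_weightedGram
    (.of_forall fun t => inv_pos.2 (hpos _ (hg _).1)) hint hph

/-- Positive definiteness (hence invertibility) of the Jacobian of the dual-to-moment map: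
for an entropy-like `φ` which is `C²` on `(0,∞)` with `φ'' > 0`, and `g = (φ')⁻¹`, the
matrix `∫ (1,a)⊗(1,a) [φ''(g(α + λ·a))]⁻¹ dμ` is positive definite; the pseudo-Haar
property enters as: `ξ·(1,a(t)) = 0` a.e. forces `ξ = 0`. -/
theorem dual_jacobian_posDef {X : Type*} [MeasurableSpace X]
    (μ : Measure X) [IsFiniteMeasure μ] {k : ℕ}
    (a : X → EuclideanSpace ℝ (Fin k)) (ha : MemLp a ⊤ μ)
    (φ φ' φ'' g : ℝ → ℝ)
    (hder : ∀ x ∈ Set.Ioi (0:ℝ), HasDerivAt φ (φ' x) x)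
    (hder2 : ∀ x ∈ Set.Ioi (0:ℝ), HasDerivAt φ' (φ'' x) x)
    (hpos : ∀ x ∈ Set.Ioi (0:ℝ), 0 < φ'' x)
    (hg : ∀ y : ℝ, g y ∈ Set.Ioi (0:ℝ) ∧ φ' (g y) = y)
    (hph : ∀ ξ : Fin (k + 1) → ℝ,
      (∀ᵐ t ∂μ, ∑ i, ξ i * aug a t i = 0) → ξ = 0)
    (α : ℝ) (lam : Fin k → ℝ)
    (M : Matrix (Fin (k + 1)) (Fin (k + 1)) ℝ)
    (hM : ∀ i j, M i j =
      ∫ t, aug a t i * aug a t j * (φ'' (g (α + ∑ i', lam i' * a t i')))⁻¹ ∂μ)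
    (hint : ∀ i j, Integrable
      (fun t => aug a t i * aug a t j * (φ'' (g (α + ∑ i', lam i' * a t i')))⁻¹) μ) :
    M.PosDef :=
  dual_jacobian_posDef_general μ a φ' φ'' g hpos hg hph α lam M hM hint
end

section
/- For the Shannon entropy φ(x) = x ln x, if λ(b) denotes the dual optimal Lagrange multiplier (so ρ_b = exp(α + λ·a) and ψ_s is C² with ∇ψ_s(b) = λ(b)), then the Jacobian ∂λ/∂b at b₀ equals (∫_X a ⊗ a ρ_{b₀} dμ − b₀ ⊗ b₀)^{-1}; in particular the Hessian of ψ_s at b₀ is the inverse of the covariance matrix of a under the density ρ_{b₀}. -/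
/-!
Write `Z(l) = ∫ e^{⟪l, a⟫} dμ` and `F_i(l) = ∫ a_i e^{⟪l, a⟫} dμ`. Since `ρ_b = e^{α(b)} e^{⟪λ(b), a⟫}`
is normalised and generates `b`, the moment constraints read `F_i(λ(b)) = b_i Z(λ(b))` for all `b`
near `b₀`. As `a` is essentially bounded, `Z` and `F_i` may be differentiated under the integral sign,
with partial derivatives `∂_j Z = ∫ a_j e^{⟪l, a⟫}` and `∂_j F_i = ∫ a_i a_j e^{⟪l, a⟫}`.
Differentiating the constraint at `b₀` in the direction `v` by the chain rule and dividing by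
`Z(λ(b₀)) = e^{-α(b₀)}` gives `Cov (L v) = v`.
-/

open MeasureTheory
open scoped RealInnerProductSpace

theorem MeasureTheory.MemLp.exists_ae_norm_le_s13 {X F : Type*} [MeasurableSpace X] {μ : Measure X}
    [NormedAddCommGroup F] {f : X → F} (hf : MemLp f ⊤ μ) : ∃ C, ∀ᵐ t ∂μ, ‖f t‖ ≤ C := by
  obtain ⟨C, hC⟩ := eLpNormEssSup_lt_top_iff_isBoundedUnder.mp
    ((eLpNorm_exponent_top (f := f) (μ := μ)) ▸ hf.2)
  exact ⟨C, Filter.eventually_map.mp hC⟩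

theorem abs_mul_exp_inner_le {E : Type*} [NormedAddCommGroup E] [InnerProductSpace ℝ E]
    {s K M R : ℝ} {x l : E} (hs : |s| ≤ K) (hx : ‖x‖ ≤ M) (hl : ‖l‖ ≤ R) :
    |s * Real.exp ⟪l, x⟫| ≤ K * Real.exp (R * M) := by
  have hinner : ⟪l, x⟫ ≤ R * M :=
    (real_inner_le_norm l x).trans
      (mul_le_mul hl hx (norm_nonneg x) ((norm_nonneg l).trans hl))
  rw [abs_mul, Real.abs_exp]
  exact mul_le_mul hs (Real.exp_le_exp.mpr hinner) (Real.exp_pos _).le ((abs_nonneg s).trans hs)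

theorem hasFDerivAt_mul_exp_inner {E : Type*} [NormedAddCommGroup E] [InnerProductSpace ℝ E]
    (s : ℝ) (x l : E) :
    HasFDerivAt (fun l => s * Real.exp ⟪l, x⟫) ((s * Real.exp ⟪l, x⟫) • innerSL ℝ x) l := by
  have h : HasFDerivAt (fun l => ⟪l, x⟫) (innerSL ℝ x) l := by
    convert (innerSL ℝ x).hasFDerivAt using 1
    funext l
    exact real_inner_comm x l
  simpa only [smul_smul] using h.exp.const_mul s

section ExpMoment

variable {X E : Type*} [MeasurableSpace X] {μ : Measure X}
  [NormedAddCommGroup E] [InnerProductSpace ℝ E] {a : X → E} {c : X → ℝ}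

noncomputable def expMoment (μ : Measure X) (a : X → E) (c : X → ℝ) (l : E) : ℝ :=
  ∫ t, c t * Real.exp ⟪l, a t⟫ ∂μ

theorem expMoment_eq_of_density {ρ : X → ℝ} {α : ℝ} {l : E}
    (hρ : ∀ t, ρ t = Real.exp (α + ⟪l, a t⟫)) (c : X → ℝ) :
    expMoment μ a c l = Real.exp (-α) * ∫ t, c t * ρ t ∂μ := by
  rw [expMoment, ← integral_const_mul]
  congr 1 with t
  rw [hρ t, Real.exp_add, Real.exp_neg]
  field_simp

theorem aestronglyMeasurable_mul_exp_inner (ha : AEStronglyMeasurable a μ)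
    (hc : AEStronglyMeasurable c μ) (l : E) :
    AEStronglyMeasurable (fun t => c t * Real.exp ⟪l, a t⟫) μ :=
  hc.mul (Real.continuous_exp.comp_aestronglyMeasurable (aestronglyMeasurable_const.inner ha))

variable [IsFiniteMeasure μ]

theorem integrable_mul_exp_inner (ha : MemLp a ⊤ μ) (hc : MemLp c ⊤ μ) (l : E) :
    Integrable (fun t => c t * Real.exp ⟪l, a t⟫) μ := by
  obtain ⟨M, hM⟩ := ha.exists_ae_norm_le_s13
  obtain ⟨K, hK⟩ := hc.exists_ae_norm_le_s13
  refine .of_bound (aestronglyMeasurable_mul_exp_inner ha.1 hc.1 l) (K * Real.exp (‖l‖ * M)) ?_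
  filter_upwards [hM, hK] with t hMt hKt
  exact abs_mul_exp_inner_le hKt hMt le_rfl

theorem integrable_mul_exp_inner_smul_innerSL (ha : MemLp a ⊤ μ) (hc : MemLp c ⊤ μ) (l : E) :
    Integrable (fun t => (c t * Real.exp ⟪l, a t⟫) • innerSL ℝ (a t)) μ :=
  (integrable_mul_exp_inner ha hc l).smul_of_top_left ((innerSL ℝ).comp_memLp' ha)

theorem hasFDerivAt_expMoment (ha : MemLp a ⊤ μ) (hc : MemLp c ⊤ μ) (l₀ : E) :
    HasFDerivAt (expMoment μ a c)
      (∫ t, (c t * Real.exp ⟪l₀, a t⟫) • innerSL ℝ (a t) ∂μ) l₀ := by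
  obtain ⟨M, hM⟩ := ha.exists_ae_norm_le_s13
  obtain ⟨K, hK⟩ := hc.exists_ae_norm_le_s13
  refine hasFDerivAt_integral_of_dominated_of_fderiv_le (Metric.ball_mem_nhds l₀ one_pos)
    (.of_forall (aestronglyMeasurable_mul_exp_inner ha.1 hc.1)) (integrable_mul_exp_inner ha hc l₀)
    (integrable_mul_exp_inner_smul_innerSL ha hc l₀).1 ?_
    (integrable_const (K * Real.exp ((‖l₀‖ + 1) * M) * M))
    (.of_forall fun t l _ => hasFDerivAt_mul_exp_inner (c t) (a t) l)
  filter_upwards [hM, hK] with t hMt hKt l hl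
  have hl' : ‖l‖ ≤ ‖l₀‖ + 1 := norm_le_norm_add_const_of_dist_le (Metric.mem_ball.mp hl).le
  rw [norm_smul, innerSL_apply_norm]
  exact mul_le_mul (abs_mul_exp_inner_le hKt hMt hl') hMt (norm_nonneg _)
    (mul_nonneg ((abs_nonneg _).trans hKt) (Real.exp_pos _).le)

end ExpMoment

section Euclidean

variable {X ι : Type*} [MeasurableSpace X] {μ : Measure X} [Fintype ι]
  {a : X → EuclideanSpace ℝ ι} {c : X → ℝ}

theorem MeasureTheory.MemLp.euclidean_apply (ha : MemLp a ⊤ μ) (j : ι) :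
    MemLp (fun t => a t j) ⊤ μ :=
  (EuclideanSpace.proj (𝕜 := ℝ) j).comp_memLp' ha

variable [IsFiniteMeasure μ]

theorem hasFDerivAt_expMoment_euclidean (ha : MemLp a ⊤ μ) (hc : MemLp c ⊤ μ)
    (l₀ : EuclideanSpace ℝ ι) :
    HasFDerivAt (expMoment μ a c)
      (∑ j, expMoment μ a (fun t => c t * a t j) l₀ • EuclideanSpace.proj (𝕜 := ℝ) j) l₀ := by
  refine (hasFDerivAt_expMoment ha hc l₀).congr_fderiv (ContinuousLinearMap.ext fun w => ?_)
  rw [ContinuousLinearMap.integral_apply (integrable_mul_exp_inner_smul_innerSL ha hc l₀)]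
  have hinner : ∀ t, ⟪a t, w⟫ = ∑ j, a t j * w j := fun t => by
    simp [PiLp.inner_apply, mul_comm]
  simp only [expMoment, FunLike.coe_sum, Finset.sum_apply, FunLike.coe_smul, Pi.smul_apply,
    PiLp.proj_apply, smul_eq_mul, innerSL_apply_apply, hinner, Finset.mul_sum]
  simp_rw [← integral_mul_const]
  rw [← integral_finsetSum _ fun j _ =>
    ((integrable_mul_exp_inner ha ((ha.euclidean_apply j).mul' hc) l₀).mul_const (w j))]
  congr 1 with t
  exact Finset.sum_congr rfl fun j _ => by ring

theorem sum_expMoment_mul_apply_of_mean_eq {lam : EuclideanSpace ℝ ι → EuclideanSpace ℝ ι}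
    {L : EuclideanSpace ℝ ι →L[ℝ] EuclideanSpace ℝ ι} {b₀ : EuclideanSpace ℝ ι}
    (ha : MemLp a ⊤ μ) (hL : HasFDerivAt lam L b₀)
    {i : ι} (hmean : ∀ᶠ b in nhds b₀,
      expMoment μ a (fun t => a t i) (lam b) = b i * expMoment μ a (fun _ => 1) (lam b))
    (v : EuclideanSpace ℝ ι) :
    ∑ j, expMoment μ a (fun t => a t i * a t j) (lam b₀) * L v j
      = b₀ i * ∑ j, expMoment μ a (fun t => 1 * a t j) (lam b₀) * L v j
        + expMoment μ a (fun _ => 1) (lam b₀) * v i := by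
  have hlhs := (hasFDerivAt_expMoment_euclidean ha (ha.euclidean_apply i) (lam b₀)).comp b₀ hL
  have hrhs := (EuclideanSpace.proj (𝕜 := ℝ) i).hasFDerivAt.mul
    ((hasFDerivAt_expMoment_euclidean ha (memLp_top_const (1 : ℝ)) (lam b₀)).comp b₀ hL)
  have h := congr($(hlhs.unique (hrhs.congr_of_eventuallyEq ?_)) v)
  · simpa using h
  · filter_upwards [hmean] with b hb
    simp only [Function.comp_apply, Pi.mul_apply, PiLp.proj_apply, hb]

end Euclidean

theorem shannon_hessian_eq_inv_covariance_general {X : Type*} [MeasurableSpace X]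
    (μ : Measure X) [IsFiniteMeasure μ] {k : ℕ}
    (a : X → EuclideanSpace ℝ (Fin k)) (ha : MemLp a ⊤ μ)
    (Q : Set (EuclideanSpace ℝ (Fin k))) (hQ : IsOpen Q)
    (α : EuclideanSpace ℝ (Fin k) → ℝ)
    (lam : EuclideanSpace ℝ (Fin k) → EuclideanSpace ℝ (Fin k))
    (ρ : EuclideanSpace ℝ (Fin k) → X → ℝ)
    (hρ : ∀ b ∈ Q, ∀ t, ρ b t = Real.exp (α b + ⟪lam b, a t⟫))
    (hnorm : ∀ b ∈ Q, ∫ t, ρ b t ∂μ = 1)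
    (hgen : ∀ b ∈ Q, ∀ i, ∫ t, a t i * ρ b t ∂μ = b i)
    (b₀ : EuclideanSpace ℝ (Fin k)) (hb₀ : b₀ ∈ Q)
    (Cov : Matrix (Fin k) (Fin k) ℝ)
    (hCov : ∀ i j, Cov i j = (∫ t, a t i * a t j * ρ b₀ t ∂μ) - b₀ i * b₀ j)
    (hCovinv : IsUnit Cov.det)
    (L : EuclideanSpace ℝ (Fin k) →L[ℝ] EuclideanSpace ℝ (Fin k))
    (hL : HasFDerivAt lam L b₀) :
    ∀ v : EuclideanSpace ℝ (Fin k), ∀ i,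
      L v i = (Cov⁻¹).mulVec (fun j => v j) i := by
  have hmean : ∀ b ∈ Q, ∀ i,
      expMoment μ a (fun t => a t i) (lam b) = b i * expMoment μ a (fun _ => 1) (lam b) := by
    intro b hb i
    rw [expMoment_eq_of_density (hρ b hb), expMoment_eq_of_density (hρ b hb), hgen b hb i]
    simp only [one_mul, hnorm b hb]
    ring
  have hCovL : ∀ v, Cov.mulVec (fun j => L v j) = fun i => v i := by
    intro v
    ext i
    have h := sum_expMoment_mul_apply_of_mean_eq ha hL
      (Filter.eventually_of_mem (hQ.mem_nhds hb₀) fun b hb => hmean b hb i) v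
    simp only [expMoment_eq_of_density (hρ b₀ hb₀), one_mul, hgen b₀ hb₀, hnorm b₀ hb₀,
      mul_assoc, ← Finset.mul_sum] at h
    simp only [Matrix.mulVec, dotProduct, hCov, sub_mul, Finset.sum_sub_distrib, mul_assoc,
      ← Finset.mul_sum]
    refine mul_left_cancel₀ (Real.exp_ne_zero (-α b₀)) ?_
    linear_combination h
  intro v i
  let := Cov.invertibleOfIsUnitDet hCovinv
  rw [Matrix.inv_mulVec_eq_vec (hCovL v).symm]

/-- For the Shannon entropy, the Jacobian of the dual optimal Lagrange multiplier map
`b ↦ λ(b)` at `b₀` (equivalently, the Hessian of the singular potential `ψ_s`, since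
`∇ψ_s = λ`) is the inverse of the covariance matrix
`∫ a⊗a ρ_{b₀} dμ − b₀⊗b₀` of `a` under the maximal-entropy density
`ρ_b = exp(α(b) + λ(b)·a)` generating `b`. -/
theorem shannon_hessian_eq_inv_covariance {X : Type*} [MeasurableSpace X]
    (μ : Measure X) [IsFiniteMeasure μ] {k : ℕ}
    (a : X → EuclideanSpace ℝ (Fin k)) (ha : MemLp a ⊤ μ)
    (Q : Set (EuclideanSpace ℝ (Fin k))) (hQ : IsOpen Q)
    (α : EuclideanSpace ℝ (Fin k) → ℝ)
    (lam : EuclideanSpace ℝ (Fin k) → EuclideanSpace ℝ (Fin k))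
    (ρ : EuclideanSpace ℝ (Fin k) → X → ℝ)
    (hρ : ∀ b ∈ Q, ∀ t, ρ b t = Real.exp (α b + ⟪lam b, a t⟫))
    (hρint : ∀ b ∈ Q, Integrable (ρ b) μ)
    (hρint2 : ∀ b ∈ Q, ∀ i j, Integrable (fun t => a t i * a t j * ρ b t) μ)
    (hnorm : ∀ b ∈ Q, ∫ t, ρ b t ∂μ = 1)
    (hgen : ∀ b ∈ Q, ∀ i, ∫ t, a t i * ρ b t ∂μ = b i)
    (ψ : EuclideanSpace ℝ (Fin k) → ℝ)
    (hψgrad : ∀ b ∈ Q, HasGradientAt ψ (lam b) b)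
    (b₀ : EuclideanSpace ℝ (Fin k)) (hb₀ : b₀ ∈ Q)
    (Cov : Matrix (Fin k) (Fin k) ℝ)
    (hCov : ∀ i j, Cov i j = (∫ t, a t i * a t j * ρ b₀ t ∂μ) - b₀ i * b₀ j)
    (hCovinv : IsUnit Cov.det)
    (L : EuclideanSpace ℝ (Fin k) →L[ℝ] EuclideanSpace ℝ (Fin k))
    (hL : HasFDerivAt lam L b₀) :
    ∀ v : EuclideanSpace ℝ (Fin k), ∀ i,
      L v i = (Cov⁻¹).mulVec (fun j => v j) i :=
  shannon_hessian_eq_inv_covariance_general μ a ha Q hQ α lam ρ hρ hnorm hgen b₀ hb₀ Cov hCov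
    hCovinv L hL
end

section
/- Let f : Q → ℝ be continuous and bounded below on a nonempty relatively closed subset A ⊂ Q with f = +∞ off A, and define I_P(ρ) = ∫_X φ(ρ) dμ + f(b_ρ) on P(X) and I_Q(b) = ψ_s(b) + f(b) on Q, where b_ρ = ∫_X a ρ dμ. Then inf_{ρ ∈ P(X)} I_P(ρ) = inf_{b ∈ Q} I_Q(b), both infima are attained, and b* minimizes I_Q globally if and only if ρ_{b*} minimizes I_P globally; moreover every global minimizer of I_P equals ρ_{b*} for some global minimizer b* of I_Q. -/
/-!
Both problems are linked by `ρ ↦ b_ρ` and `b ↦ ρ_b`: by the definition of `ψ_s`,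
`I_P(ρ_b) = I_Q(b)` and `I_Q(b_ρ) ≤ I_P(ρ)`, so minimisers and infima correspond, and for a
minimiser `ρ` equality in the second relation forces `ρ = ρ_{b_ρ}` by uniqueness of the optimal
density. A minimiser of `I_Q` exists because `Q` is bounded and `ψ_s` blows up at `∂Q`: a sublevel
set of `I_Q` stays a fixed distance away from `∂Q`, hence is contained in a compact subset of `A`.
-/

open MeasureTheory Filter

lemma isBounded_momentSet {X : Type*} [MeasurableSpace X] {μ : Measure X} {k : ℕ}
    {a : X → EuclideanSpace ℝ (Fin k)} (ha : MemLp a ⊤ μ) :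
    Bornology.IsBounded (momentSet μ a) := by
  set C := lpNorm a ⊤ μ
  have hmoments : ∀ ρ ∈ probDens μ, ‖fun i => ∫ t, a t i * ρ t ∂μ‖ ≤ C := by
    rintro ρ ⟨hint, hpos, hone⟩
    refine (pi_norm_le_iff_of_nonneg lpNorm_nonneg).2 fun i => ?_
    calc ‖∫ t, a t i * ρ t ∂μ‖ ≤ ∫ t, C * ρ t ∂μ := by
          refine norm_integral_le_of_norm_le (hint.const_mul C) ?_
          filter_upwards [ae_le_lpNorm_exponent_top ha, hpos] with t hat hρt
          rw [norm_mul, Real.norm_of_nonneg hρt]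
          exact mul_le_mul_of_nonneg_right ((PiLp.norm_apply_le (a t) i).trans hat) hρt
      _ = C := by rw [integral_const_mul, hone, mul_one]
  have hbdd : Bornology.IsBounded ((fun ρ i => ∫ t, a t i * ρ t ∂μ) '' probDens μ) :=
    isBounded_iff_forall_norm_le.2 ⟨C, Set.forall_mem_image.2 hmoments⟩
  rw [momentSet, show mom μ a = _ ∘ _ from rfl, Set.image_comp]
  exact (EuclideanSpace.equiv (Fin k) ℝ).symm.lipschitz.isBounded_image hbdd

section Frontier

open Metric

variable {E : Type*} [PseudoMetricSpace E] {Q A : Set E}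

lemma mem_of_mem_closure_of_infDist_frontier_pos {x : E} (hx : x ∈ closure Q)
    (hd : 0 < infDist x (frontier Q)) : x ∈ Q := by
  have hxf : x ∉ frontier Q := fun h => hd.ne' (infDist_zero_of_mem h)
  exact interior_subset (closure_sdiff_frontier Q ▸ ⟨hx, hxf⟩)

lemma frontier_blowup_add_of_bddBelow {ψ f : E → ℝ} (hAQ : A ⊆ Q)
    (hψ : ∀ M : ℝ, ∃ ε : ℝ, 0 < ε ∧ ∀ b ∈ Q, infDist b (frontier Q) ≤ ε → M ≤ ψ b)
    (hf : ∃ C : ℝ, ∀ b ∈ A, C ≤ f b) (M : ℝ) :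
    ∃ ε : ℝ, 0 < ε ∧ ∀ b ∈ A, infDist b (frontier Q) ≤ ε → M ≤ ψ b + f b := by
  obtain ⟨C, hC⟩ := hf
  obtain ⟨ε, hε, hψε⟩ := hψ (M - C)
  exact ⟨ε, hε, fun b hb hd => by linarith [hψε b (hAQ hb) hd, hC b hb]⟩

theorem ContinuousOn.exists_isMinOn_of_infDist_frontier_le [ProperSpace E] {g : E → ℝ}
    (hg : ContinuousOn g A) (hQ : Bornology.IsBounded Q) (hAQ : A ⊆ Q)
    (hAcl : closure A ∩ Q ⊆ A) (hA : A.Nonempty)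
    (hblow : ∀ M : ℝ, ∃ ε : ℝ, 0 < ε ∧ ∀ b ∈ A, infDist b (frontier Q) ≤ ε → M ≤ g b) :
    ∃ b ∈ A, IsMinOn g A b := by
  obtain ⟨b₀, hb₀⟩ := hA
  obtain ⟨ε, hε, hgε⟩ := hblow (g b₀ + 1)
  set K := closure A ∩ {b | ε ≤ infDist b (frontier Q)}
  have hKA : K ⊆ A := fun b hb => hAcl ⟨hb.1,
    mem_of_mem_closure_of_infDist_frontier_pos (closure_mono hAQ hb.1) (hε.trans_le hb.2)⟩
  have hsublevel : ∀ b ∈ A, g b ≤ g b₀ → b ∈ K := fun b hb hle =>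
    ⟨subset_closure hb, le_of_not_gt fun hd => by linarith [hgε b hb hd.le]⟩
  have hK : IsCompact K := isCompact_of_isClosed_isBounded
    (isClosed_closure.inter (isClosed_le continuous_const (continuous_infDist_pt _)))
    (hQ.closure.subset (Set.inter_subset_left.trans (closure_mono hAQ)))
  obtain ⟨b, hbK, hbmin⟩ := hK.exists_isMinOn ⟨b₀, hsublevel b₀ hb₀ le_rfl⟩ (hg.mono hKA)
  refine ⟨b, hKA hbK, fun b' hb' => ?_⟩
  by_cases hle : g b' ≤ g b₀
  · exact hbmin (hsublevel b' hb' hle)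
  · exact (hbmin (hsublevel b₀ hb₀ le_rfl)).trans (not_le.1 hle).le

end Frontier

section Transfer

variable {P B : Type*} {S : Set P} {A : Set B} {F : P → ℝ} {G : B → ℝ} {m : P → B}
  {r : B → P}

lemma isMinOn_iff_isMinOn_of_le (hrS : Set.MapsTo r A S) (hrF : ∀ b ∈ A, F (r b) = G b)
    (hmA : Set.MapsTo m S A) (hmF : ∀ ρ ∈ S, G (m ρ) ≤ F ρ) {b : B} (hb : b ∈ A) :
    IsMinOn G A b ↔ IsMinOn F S (r b) := by
  refine ⟨fun h σ hσ => ?_, fun h b' hb' => ?_⟩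
  · calc F (r b) = G b := hrF b hb
      _ ≤ G (m σ) := h (hmA hσ)
      _ ≤ F σ := hmF σ hσ
  · calc G b = F (r b) := (hrF b hb).symm
      _ ≤ F (r b') := h (hrS hb')
      _ = G b' := hrF b' hb'

lemma IsMinOn.isMinOn_map_of_le (hrS : Set.MapsTo r A S) (hrF : ∀ b ∈ A, F (r b) = G b)
    (hmA : Set.MapsTo m S A) (hmF : ∀ ρ ∈ S, G (m ρ) ≤ F ρ) {ρ : P} (hρ : ρ ∈ S)
    (h : IsMinOn F S ρ) : IsMinOn G A (m ρ) ∧ F ρ = G (m ρ) := by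
  refine ⟨fun b' hb' => ?_, le_antisymm ?_ (hmF ρ hρ)⟩
  · calc G (m ρ) ≤ F ρ := hmF ρ hρ
      _ ≤ F (r b') := h (hrS hb')
      _ = G b' := hrF b' hb'
  · calc F ρ ≤ F (r (m ρ)) := h (hrS (hmA hρ))
      _ = G (m ρ) := hrF _ (hmA hρ)

lemma sInf_image_eq_of_isMinOn (hrS : Set.MapsTo r A S) (hrF : ∀ b ∈ A, F (r b) = G b)
    (hmA : Set.MapsTo m S A) (hmF : ∀ ρ ∈ S, G (m ρ) ≤ F ρ) {b : B} (hb : b ∈ A)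
    (h : IsMinOn G A b) : sInf (G '' A) = sInf (F '' S) := by
  have h' := (isMinOn_iff_isMinOn_of_le hrS hrF hmA hmF hb).1 h
  rw [sInf_image', sInf_image', h.iInf_eq hb, h'.iInf_eq (hrS hb), hrF b hb]

end Transfer

theorem global_minimisers_equiv_general {X : Type*} [MeasurableSpace X]
    (μ : Measure X) {k : ℕ}
    (a : X → EuclideanSpace ℝ (Fin k)) (ha : MemLp a ⊤ μ)
    (φ : ℝ → ℝ)
    -- the singular potential, its optimal densities, and their properties
    (ψ : EuclideanSpace ℝ (Fin k) → ℝ) (ρmin : EuclideanSpace ℝ (Fin k) → X → ℝ)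
    (hρP : ∀ b ∈ momentSet μ a, ρmin b ∈ probDens μ)
    (hρgen : ∀ b ∈ momentSet μ a, mom μ a (ρmin b) = b)
    (hρint : ∀ b ∈ momentSet μ a, Integrable (fun t => φ (ρmin b t)) μ)
    (hψ : ∀ b ∈ momentSet μ a, ψ b = ∫ t, φ (ρmin b t) ∂μ)
    (hmin : ∀ b ∈ momentSet μ a, ∀ ρ ∈ probDens μ, mom μ a ρ = b →
      Integrable (fun t => φ (ρ t)) μ → ψ b ≤ ∫ t, φ (ρ t) ∂μ)
    (huniq : ∀ b ∈ momentSet μ a, ∀ ρ ∈ probDens μ, mom μ a ρ = b →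
      Integrable (fun t => φ (ρ t)) μ → ψ b = ∫ t, φ (ρ t) ∂μ → ρ =ᵐ[μ] ρmin b)
    (hψcont : ContinuousOn ψ (momentSet μ a))
    (hblow : ∀ M : ℝ, ∃ ε : ℝ, 0 < ε ∧ ∀ b ∈ momentSet μ a,
      Metric.infDist b (frontier (momentSet μ a)) ≤ ε → M ≤ ψ b)
    -- the constraint set A and the function f
    (A : Set (EuclideanSpace ℝ (Fin k))) (hAne : A.Nonempty)
    (hAQ : A ⊆ momentSet μ a) (hAcl : closure A ∩ momentSet μ a ⊆ A)
    (f : EuclideanSpace ℝ (Fin k) → ℝ) (hf : ContinuousOn f A)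
    (hfbd : ∃ Cf : ℝ, ∀ b ∈ A, Cf ≤ f b) :
    let SP : Set (X → ℝ) := {ρ | ρ ∈ probDens μ ∧
      Integrable (fun t => φ (ρ t)) μ ∧ mom μ a ρ ∈ A}
    let IP : (X → ℝ) → ℝ := fun ρ => (∫ t, φ (ρ t) ∂μ) + f (mom μ a ρ)
    let IQ : EuclideanSpace ℝ (Fin k) → ℝ := fun b => ψ b + f b
    (∃ b ∈ A, ∀ b' ∈ A, IQ b ≤ IQ b') ∧
    (∃ ρ ∈ SP, ∀ σ ∈ SP, IP ρ ≤ IP σ) ∧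
    sInf (IQ '' A) = sInf (IP '' SP) ∧
    (∀ b ∈ A, ((∀ b' ∈ A, IQ b ≤ IQ b') ↔
      (ρmin b ∈ SP ∧ ∀ σ ∈ SP, IP (ρmin b) ≤ IP σ))) ∧
    (∀ ρ ∈ SP, (∀ σ ∈ SP, IP ρ ≤ IP σ) →
      ∃ b ∈ A, (∀ b' ∈ A, IQ b ≤ IQ b') ∧ ρ =ᵐ[μ] ρmin b) := by
  intro SP IP IQ
  have hrSP : Set.MapsTo ρmin A SP := fun b hb =>
    ⟨hρP b (hAQ hb), hρint b (hAQ hb), by rwa [hρgen b (hAQ hb)]⟩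
  have hrI : ∀ b ∈ A, IP (ρmin b) = IQ b := fun b hb => by
    simp only [IP, IQ, hρgen b (hAQ hb), hψ b (hAQ hb)]
  have hmA : Set.MapsTo (mom μ a) SP A := fun ρ hρ => hρ.2.2
  have hmI : ∀ ρ ∈ SP, IQ (mom μ a ρ) ≤ IP ρ := fun ρ hρ =>
    add_le_add_left (hmin _ (hAQ hρ.2.2) ρ hρ.1 rfl hρ.2.1) _
  obtain ⟨b, hbA, hbmin⟩ : ∃ b ∈ A, IsMinOn IQ A b :=
    (hψcont.mono hAQ).add hf |>.exists_isMinOn_of_infDist_frontier_le (isBounded_momentSet ha)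
      hAQ hAcl hAne (frontier_blowup_add_of_bddBelow hAQ hblow hfbd)
  have hlift : ∀ b ∈ A, IsMinOn IQ A b ↔ IsMinOn IP SP (ρmin b) :=
    fun b hb => isMinOn_iff_isMinOn_of_le hrSP hrI hmA hmI hb
  simp only [← isMinOn_iff]
  refine ⟨⟨b, hbA, hbmin⟩, ⟨ρmin b, hrSP hbA, (hlift b hbA).1 hbmin⟩,
    sInf_image_eq_of_isMinOn hrSP hrI hmA hmI hbA hbmin,
    fun b' hb' => (hlift b' hb').trans (and_iff_right (hrSP hb')).symm, fun ρ hρ h => ?_⟩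
  obtain ⟨hρmin, hIP⟩ := h.isMinOn_map_of_le hrSP hrI hmA hmI hρ
  have hψρ : ψ (mom μ a ρ) = ∫ t, φ (ρ t) ∂μ := by
    simp only [IP, IQ] at hIP
    linarith
  exact ⟨mom μ a ρ, hρ.2.2, hρmin, huniq _ (hAQ hρ.2.2) ρ hρ.1 rfl hρ.2.1 hψρ⟩

/-- Equivalence of global minimisation of the microscopic free energy
`I_P(ρ) = ∫ φ(ρ) dμ + f(b_ρ)` and the macroscopic free energy
`I_Q(b) = ψ_s(b) + f(b)`: the infima coincide and are attained, `b*` minimises `I_Q`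
iff `ρ_{b*}` minimises `I_P`, and every global minimiser of `I_P` is of the form
`ρ_{b*}` for a global minimiser `b*` of `I_Q`. -/
theorem global_minimisers_equiv {X : Type*} [MeasurableSpace X]
    (μ : Measure X) [IsFiniteMeasure μ] {k : ℕ}
    (a : X → EuclideanSpace ℝ (Fin k)) (ha : MemLp a ⊤ μ)
    (φ : ℝ → ℝ)
    (hconv : StrictConvexOn ℝ (Set.Ioi 0) φ) (hconv0 : ConvexOn ℝ (Set.Ici 0) φ)
    -- the singular potential, its optimal densities, and their properties
    (ψ : EuclideanSpace ℝ (Fin k) → ℝ) (ρmin : EuclideanSpace ℝ (Fin k) → X → ℝ)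
    (hρP : ∀ b ∈ momentSet μ a, ρmin b ∈ probDens μ)
    (hρgen : ∀ b ∈ momentSet μ a, mom μ a (ρmin b) = b)
    (hρint : ∀ b ∈ momentSet μ a, Integrable (fun t => φ (ρmin b t)) μ)
    (hψ : ∀ b ∈ momentSet μ a, ψ b = ∫ t, φ (ρmin b t) ∂μ)
    (hmin : ∀ b ∈ momentSet μ a, ∀ ρ ∈ probDens μ, mom μ a ρ = b →
      Integrable (fun t => φ (ρ t)) μ → ψ b ≤ ∫ t, φ (ρ t) ∂μ)
    (huniq : ∀ b ∈ momentSet μ a, ∀ ρ ∈ probDens μ, mom μ a ρ = b →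
      Integrable (fun t => φ (ρ t)) μ → ψ b = ∫ t, φ (ρ t) ∂μ → ρ =ᵐ[μ] ρmin b)
    (hψcont : ContinuousOn ψ (momentSet μ a))
    (hblow : ∀ M : ℝ, ∃ ε : ℝ, 0 < ε ∧ ∀ b ∈ momentSet μ a,
      Metric.infDist b (frontier (momentSet μ a)) ≤ ε → M ≤ ψ b)
    -- the constraint set A and the function f
    (A : Set (EuclideanSpace ℝ (Fin k))) (hAne : A.Nonempty)
    (hAQ : A ⊆ momentSet μ a) (hAcl : closure A ∩ momentSet μ a ⊆ A)
    (f : EuclideanSpace ℝ (Fin k) → ℝ) (hf : ContinuousOn f A)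
    (hfbd : ∃ Cf : ℝ, ∀ b ∈ A, Cf ≤ f b) :
    let SP : Set (X → ℝ) := {ρ | ρ ∈ probDens μ ∧
      Integrable (fun t => φ (ρ t)) μ ∧ mom μ a ρ ∈ A}
    let IP : (X → ℝ) → ℝ := fun ρ => (∫ t, φ (ρ t) ∂μ) + f (mom μ a ρ)
    let IQ : EuclideanSpace ℝ (Fin k) → ℝ := fun b => ψ b + f b
    (∃ b ∈ A, ∀ b' ∈ A, IQ b ≤ IQ b') ∧
    (∃ ρ ∈ SP, ∀ σ ∈ SP, IP ρ ≤ IP σ) ∧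
    sInf (IQ '' A) = sInf (IP '' SP) ∧
    (∀ b ∈ A, ((∀ b' ∈ A, IQ b ≤ IQ b') ↔
      (ρmin b ∈ SP ∧ ∀ σ ∈ SP, IP (ρmin b) ≤ IP σ))) ∧
    (∀ ρ ∈ SP, (∀ σ ∈ SP, IP ρ ≤ IP σ) →
      ∃ b ∈ A, (∀ b' ∈ A, IQ b ≤ IQ b') ∧ ρ =ᵐ[μ] ρmin b) :=
  global_minimisers_equiv_general μ a ha φ ψ ρmin hρP hρgen hρint hψ hmin huniq hψcont hblow A hAne
    hAQ hAcl f hf hfbd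
end

section
/- Consider the mean-field free energy I_P(ρ) = T∫_X ρ ln ρ dμ − (1/2) K b_ρ · b_ρ with T > 0 and K a positive semidefinite symmetric k×k matrix, and suppose the a_i are L²-orthonormal and orthogonal to constants. If T > ‖a‖_∞² λ_max(K) then the Hessian of I_Q(b) = Tψ_s(b) − (1/2)Kb·b is positive definite on all of Q, so I_Q is strictly convex, the isotropic state b = 0 is the unique critical point and the global minimizer. -/
/-!
The Hessian of `I_Q` at `b` is `T (Cov b)⁻¹ - K`. Cauchy–Schwarz for the positive form
`⟪Cov b ·, ·⟫` turns `Cov b ≤ M² I` into `(Cov b)⁻¹ ≥ M⁻² I`, so the Hessian is at least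
`(T / M² - λ_max) I > 0`. Integrating along segments, the gradient `T ∇ψ - K` of `I_Q` is then
strictly monotone on `Q`; this gives strict convexity, and since the gradient vanishes at `0`,
the isotropic state is the only critical point and the global minimiser.
-/

open Set
open AffineMap (lineMap)
open scoped RealInnerProductSpace Matrix

section InnerProductSpace

variable {F : Type*} [NormedAddCommGroup F] [InnerProductSpace ℝ F]

theorem ContinuousLinearMap.IsPositive.inner_sq_le_inner_mul_inner {S : F →L[ℝ] F}
    (hS : S.IsPositive) (u w : F) : ⟪S u, w⟫ ^ 2 ≤ ⟪S u, u⟫ * ⟪S w, w⟫ := by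
  have hsymm : ⟪S w, u⟫ = ⟪S u, w⟫ := (hS.isSymmetric w u).trans (real_inner_comm _ _)
  have hquad (t : ℝ) : 0 ≤ ⟪S w, w⟫ * (t * t) + 2 * ⟪S u, w⟫ * t + ⟪S u, u⟫ := by
    have := hS.inner_nonneg_left (u + t • w)
    simp only [map_add, map_smul, inner_add_left, inner_add_right, real_inner_smul_left,
      real_inner_smul_right, hsymm] at this
    linarith
  have := discrim_le_zero hquad
  rw [discrim] at this
  nlinarith

theorem ContinuousLinearMap.IsPositive.norm_sq_le_inner_of_rightInverse {S R : F →L[ℝ] F}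
    (hS : S.IsPositive) (hSR : Function.RightInverse R S) {c : ℝ}
    (hSc : ∀ x, ⟪S x, x⟫ ≤ c * ‖x‖ ^ 2) (x : F) : ‖x‖ ^ 2 ≤ c * ⟪R x, x⟫ := by
  -- `‖x‖⁴ = ⟪S (R x), x⟫² ≤ ⟪R x, x⟫ ⟪S x, x⟫ ≤ ⟪R x, x⟫ c ‖x‖²`
  have hCS := hS.inner_sq_le_inner_mul_inner (R x) x
  rw [hSR x, real_inner_self_eq_norm_sq, real_inner_comm] at hCS
  rcases eq_or_ne x 0 with rfl | hx
  · simp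
  have hx2 : 0 < ‖x‖ ^ 2 := by positivity
  have hR : 0 ≤ ⟪R x, x⟫ := by simpa [hSR x, real_inner_comm] using hS.inner_nonneg_left (R x)
  nlinarith [hSc x]

theorem HasGradientAt.const_mul [CompleteSpace F] {f : F → ℝ} {f' x : F}
    (hf : HasGradientAt f f' x) (c : ℝ) : HasGradientAt (fun y => c * f y) (c • f') x := by
  rw [hasGradientAt_iff_hasFDerivAt, map_smul]
  exact (hasGradientAt_iff_hasFDerivAt.mp hf).const_mul c

theorem HasGradientAt.sub [CompleteSpace F] {f g : F → ℝ} {f' g' x : F}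
    (hf : HasGradientAt f f' x) (hg : HasGradientAt g g' x) :
    HasGradientAt (fun y => f y - g y) (f' - g') x := by
  rw [hasGradientAt_iff_hasFDerivAt, map_sub]
  exact (hasGradientAt_iff_hasFDerivAt.mp hf).sub (hasGradientAt_iff_hasFDerivAt.mp hg)

theorem IsSelfAdjoint.hasGradientAt_half_inner_self [CompleteSpace F] {K : F →L[ℝ] F}
    (hK : IsSelfAdjoint K) (x : F) : HasGradientAt (fun y => 1 / 2 * ⟪K y, y⟫) (K x) x := by
  rw [hasGradientAt_iff_hasFDerivAt]
  refine ((K.hasFDerivAt.inner ℝ (hasFDerivAt_id x)).const_mul (1 / 2 : ℝ)).congr_fderiv ?_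
  ext v
  have hsymm : ⟪K v, x⟫ = ⟪K x, v⟫ := (hK.isSymmetric v x).trans (real_inner_comm _ _)
  simp only [fderivInnerCLM_apply, ContinuousLinearMap.comp_apply, ContinuousLinearMap.prod_apply,
    ContinuousLinearMap.id_apply, id_eq, smul_apply, smul_eq_mul,
    InnerProductSpace.toDual_apply_apply, hsymm]
  ring

theorem HasGradientAt.hasDerivAt_comp_lineMap [CompleteSpace F] {f : F → ℝ} {f' x y : F}
    {t : ℝ} (hf : HasGradientAt f f' (lineMap x y t)) :
    HasDerivAt (fun s : ℝ => f (lineMap x y s)) ⟪f', y - x⟫ t :=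
  (hasGradientAt_iff_hasFDerivAt.mp hf).comp_hasDerivAt t AffineMap.hasDerivAt_lineMap

theorem HasFDerivAt.hasDerivAt_inner_comp_lineMap {g : F → F} {A : F →L[ℝ] F} {x y : F}
    {t : ℝ} (hg : HasFDerivAt g A (lineMap x y t)) :
    HasDerivAt (fun s : ℝ => ⟪g (lineMap x y s), y - x⟫) ⟪A (y - x), y - x⟫ t := by
  simpa using (hg.comp_hasDerivAt t AffineMap.hasDerivAt_lineMap).inner ℝ (hasDerivAt_const t _)

theorem AffineMap.lineMap_sub_lineMap_eq_smul (x y : F) (s t : ℝ) :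
    lineMap x y t - lineMap x y s = (t - s) • (y - x) := by
  simp only [AffineMap.lineMap_apply_module']
  module

variable {Q : Set F}

theorem Convex.inner_sub_sub_pos_of_hasFDerivAt (hQ : Convex ℝ Q) {g : F → F}
    {A : F → F →L[ℝ] F} (hg : ∀ b ∈ Q, HasFDerivAt g (A b) b)
    (hA : ∀ b ∈ Q, ∀ v ≠ 0, 0 < ⟪A b v, v⟫) {x y : F} (hx : x ∈ Q) (hy : y ∈ Q)
    (hxy : x ≠ y) : 0 < ⟪g y - g x, y - x⟫ := by
  have hmem (t : ℝ) (ht : t ∈ Icc 0 1) : lineMap x y t ∈ Q := hQ.lineMap_mem hx hy ht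
  have hderiv (t : ℝ) (ht : t ∈ Icc 0 1) : HasDerivAt (fun s : ℝ => ⟪g (lineMap x y s), y - x⟫)
      ⟪A (lineMap x y t) (y - x), y - x⟫ t :=
    (hg _ (hmem t ht)).hasDerivAt_inner_comp_lineMap
  have hmono : StrictMonoOn (fun s : ℝ => ⟪g (lineMap x y s), y - x⟫) (Icc 0 1) := by
    refine strictMonoOn_of_deriv_pos (convex_Icc 0 1)
      (fun t ht => (hderiv t ht).continuousAt.continuousWithinAt) fun t ht => ?_
    rw [interior_Icc] at ht
    rw [(hderiv t (Ioo_subset_Icc_self ht)).deriv]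
    exact hA _ (hmem t (Ioo_subset_Icc_self ht)) _ (sub_ne_zero.2 hxy.symm)
  have h01 := hmono (left_mem_Icc.2 zero_le_one) (right_mem_Icc.2 zero_le_one) zero_lt_one
  simp only [AffineMap.lineMap_apply_zero, AffineMap.lineMap_apply_one] at h01
  rw [inner_sub_left]
  linarith

theorem Convex.strictConvexOn_of_hasGradientAt [CompleteSpace F] (hQ : Convex ℝ Q)
    {f : F → ℝ} {g : F → F} (hf : ∀ b ∈ Q, HasGradientAt f (g b) b)
    (hg : ∀ x ∈ Q, ∀ y ∈ Q, x ≠ y → 0 < ⟪g y - g x, y - x⟫) : StrictConvexOn ℝ Q f := by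
  refine ⟨hQ, fun x hx y hy hxy a b ha hb hab => ?_⟩
  have hmem (t : ℝ) (ht : t ∈ Icc 0 1) : lineMap x y t ∈ Q := hQ.lineMap_mem hx hy ht
  have hderiv (t : ℝ) (ht : t ∈ Icc 0 1) : HasDerivAt (fun s : ℝ => f (lineMap x y s))
      ⟪g (lineMap x y t), y - x⟫ t :=
    (hf _ (hmem t ht)).hasDerivAt_comp_lineMap
  have hline : StrictConvexOn ℝ (Icc 0 1) (fun s : ℝ => f (lineMap x y s)) := by
    refine StrictMonoOn.strictConvexOn_of_deriv (convex_Icc 0 1)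
      (fun t ht => (hderiv t ht).continuousAt.continuousWithinAt) ?_
    rw [interior_Icc]
    intro s hs t ht hst
    rw [(hderiv s (Ioo_subset_Icc_self hs)).deriv, (hderiv t (Ioo_subset_Icc_self ht)).deriv]
    have hpos := hg _ (hmem s (Ioo_subset_Icc_self hs)) _ (hmem t (Ioo_subset_Icc_self ht))
      ((AffineMap.lineMap_injective ℝ hxy).ne hst.ne)
    rw [AffineMap.lineMap_sub_lineMap_eq_smul, real_inner_smul_right, inner_sub_left] at hpos
    linarith [pos_of_mul_pos_right hpos (sub_pos.2 hst).le]
  have := hline.2 (left_mem_Icc.2 zero_le_one) (right_mem_Icc.2 zero_le_one) zero_ne_one ha hb hab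
  obtain rfl : a = 1 - b := eq_sub_of_add_eq hab
  simpa [AffineMap.lineMap_apply_module] using this

theorem ConvexOn.isMinOn_of_hasGradientAt_zero [CompleteSpace F] {f : F → ℝ}
    (hf : ConvexOn ℝ Q f) {x : F} (hx : x ∈ Q) (hfx : HasGradientAt f 0 x) : IsMinOn f Q x := by
  intro y hy
  have hline : ConvexOn ℝ (Icc 0 1) (fun s : ℝ => f (lineMap x y s)) :=
    (hf.comp_affineMap (lineMap x y)).subset (fun t ht => hf.1.lineMap_mem hx hy ht)
      (convex_Icc 0 1)
  have hderiv : HasDerivAt (fun s : ℝ => f (lineMap x y s)) 0 0 := by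
    rw [← AffineMap.lineMap_apply_zero (k := ℝ) x y] at hfx
    simpa using hfx.hasDerivAt_comp_lineMap
  have := hline.le_slope_of_hasDerivAt (left_mem_Icc.2 zero_le_one)
    (right_mem_Icc.2 zero_le_one) zero_lt_one hderiv
  simpa [slope_def_field] using this

end InnerProductSpace

namespace Matrix

variable {n : Type*} [Fintype n] [DecidableEq n]

theorem posDef_iff_inner_toEuclideanCLM_pos {A : Matrix n n ℝ} :
    A.PosDef ↔ A.IsHermitian ∧
      ∀ x : EuclideanSpace ℝ n, x ≠ 0 → 0 < ⟪toEuclideanCLM (𝕜 := ℝ) A x, x⟫ := by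
  have hquad (x : EuclideanSpace ℝ n) :
      ⟪toEuclideanCLM (𝕜 := ℝ) A x, x⟫ = star x.ofLp ⬝ᵥ A *ᵥ x.ofLp := by
    rw [real_inner_comm, inner_toEuclideanCLM, star_trivial]
  simp_rw [posDef_iff_dotProduct_mulVec, hquad,
    ← (WithLp.equiv 2 (n → ℝ)).forall_congr_right]
  simp

theorem PosSemidef.isPositive_toEuclideanCLM {A : Matrix n n ℝ} (hA : A.PosSemidef) :
    (toEuclideanCLM (𝕜 := ℝ) A).IsPositive := by
  rw [← ContinuousLinearMap.isPositive_toLinearMap_iff, coe_toEuclideanCLM_eq_toEuclideanLin]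
  exact isPositive_toEuclideanLin_iff.2 hA

theorem PosDef.norm_sq_le_inner_inv {S : Matrix n n ℝ} (hS : S.PosDef) {c : ℝ}
    (hSc : ∀ x, ⟪toEuclideanCLM (𝕜 := ℝ) S x, x⟫ ≤ c * ‖x‖ ^ 2) (x : EuclideanSpace ℝ n) :
    ‖x‖ ^ 2 ≤ c * ⟪toEuclideanCLM (𝕜 := ℝ) S⁻¹ x, x⟫ := by
  refine hS.posSemidef.isPositive_toEuclideanCLM.norm_sq_le_inner_of_rightInverse
    (fun y => ?_) hSc x
  change (toEuclideanCLM (𝕜 := ℝ) S * toEuclideanCLM (𝕜 := ℝ) S⁻¹) y = y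
  rw [← map_mul, mul_nonsing_inv _ hS.det_pos.ne'.isUnit, map_one]
  rfl

theorem PosDef.smul_inv_sub {S K : Matrix n n ℝ} (hS : S.PosDef) (hK : K.IsHermitian)
    {M lmax T : ℝ} (hSle : ∀ x, ⟪toEuclideanCLM (𝕜 := ℝ) S x, x⟫ ≤ M ^ 2 * ‖x‖ ^ 2)
    (hKle : ∀ x, ⟪toEuclideanCLM (𝕜 := ℝ) K x, x⟫ ≤ lmax * ‖x‖ ^ 2)
    (hT0 : 0 < T) (hT : M ^ 2 * lmax < T) : (T • S⁻¹ - K).PosDef := by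
  refine posDef_iff_inner_toEuclideanCLM_pos.2
    ⟨(hS.inv.isHermitian.smul (IsSelfAdjoint.all T)).sub hK, fun x hx => ?_⟩
  have hinv := hS.norm_sq_le_inner_inv hSle x
  have hx2 : 0 < ‖x‖ ^ 2 := by positivity
  have hKx := hKle x
  simp only [map_sub, map_smul, _root_.sub_apply, _root_.smul_apply, inner_sub_left,
    real_inner_smul_left]
  nlinarith [sq_nonneg M]

end Matrix

theorem meanField_global_stability_general {k : ℕ}
    (Q : Set (EuclideanSpace ℝ (Fin k)))
    (hQc : Convex ℝ Q)
    (h0Q : (0 : EuclideanSpace ℝ (Fin k)) ∈ Q)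
    (ψ : EuclideanSpace ℝ (Fin k) → ℝ)
    (gψ : EuclideanSpace ℝ (Fin k) → EuclideanSpace ℝ (Fin k))
    (hψd : ∀ b ∈ Q, HasGradientAt ψ (gψ b) b)
    (hgψ0 : gψ 0 = 0)
    (Cov : EuclideanSpace ℝ (Fin k) → Matrix (Fin k) (Fin k) ℝ)
    (hCovPD : ∀ b ∈ Q, (Cov b).PosDef)
    (hHess : ∀ b ∈ Q, HasFDerivAt gψ
      ((Matrix.toEuclideanCLM (𝕜 := ℝ) ((Cov b)⁻¹) :
        EuclideanSpace ℝ (Fin k) →L[ℝ] EuclideanSpace ℝ (Fin k))) b)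
    (M : ℝ)
    (hCovle : ∀ b ∈ Q, ∀ x : EuclideanSpace ℝ (Fin k),
      ⟪Matrix.toEuclideanCLM (𝕜 := ℝ) (Cov b) x, x⟫ ≤ M ^ 2 * ‖x‖ ^ 2)
    (K : Matrix (Fin k) (Fin k) ℝ) (hKsymm : K.IsSymm)
    (lmax : ℝ)
    (hlmax : ∀ x : EuclideanSpace ℝ (Fin k),
      ⟪Matrix.toEuclideanCLM (𝕜 := ℝ) K x, x⟫ ≤ lmax * ‖x‖ ^ 2)
    (T : ℝ) (hT0 : 0 < T) (hT : M ^ 2 * lmax < T) :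
    let IQ : EuclideanSpace ℝ (Fin k) → ℝ :=
      fun b => T * ψ b - (1 / 2) * ⟪Matrix.toEuclideanCLM (𝕜 := ℝ) K b, b⟫
    (∀ b ∈ Q, (T • (Cov b)⁻¹ - K).PosDef) ∧
    StrictConvexOn ℝ Q IQ ∧
    (∀ b ∈ Q, T • gψ b - Matrix.toEuclideanCLM (𝕜 := ℝ) K b = 0 → b = 0) ∧
    (∀ b ∈ Q, IQ 0 ≤ IQ b) := by
  intro IQ
  set KC := Matrix.toEuclideanCLM (𝕜 := ℝ) K
  have hK : K.IsHermitian := Matrix.isHermitian_iff_isSymm.2 hKsymm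
  have hessPD : ∀ b ∈ Q, (T • (Cov b)⁻¹ - K).PosDef := fun b hb =>
    (hCovPD b hb).smul_inv_sub hK (hCovle b hb) hlmax hT0 hT
  have hgrad : ∀ b ∈ Q, HasGradientAt IQ (T • gψ b - KC b) b := fun b hb =>
    ((hψd b hb).const_mul T).sub
      ((hK.isSelfAdjoint.map Matrix.toEuclideanCLM).hasGradientAt_half_inner_self b)
  have hmono : ∀ x ∈ Q, ∀ y ∈ Q, x ≠ y →
      0 < ⟪(T • gψ y - KC y) - (T • gψ x - KC x), y - x⟫ := by
    intro x hx y hy hxy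
    refine hQc.inner_sub_sub_pos_of_hasFDerivAt (g := fun b => T • gψ b - KC b) (fun b hb => ?_)
      (fun b hb => (Matrix.posDef_iff_inner_toEuclideanCLM_pos.1 (hessPD b hb)).2) hx hy hxy
    rw [map_sub, map_smul]
    exact ((hHess b hb).const_smul T).sub KC.hasFDerivAt
  have hconv := hQc.strictConvexOn_of_hasGradientAt hgrad hmono
  have hgrad0 : HasGradientAt IQ 0 0 := by simpa [hgψ0] using hgrad 0 h0Q
  refine ⟨hessPD, hconv, fun b hb hb0 => ?_,
    hconv.convexOn.isMinOn_of_hasGradientAt_zero h0Q hgrad0⟩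
  by_contra hne
  simpa [hb0, hgψ0] using hmono 0 h0Q b hb (Ne.symm hne)

/-- Mean-field free energy `I_Q(b) = T ψ_s(b) − (1/2) Kb·b`: if
`T > ‖a‖_∞² λ_max(K)` then the Hessian `T (Cov b)⁻¹ − K` of `I_Q` is positive definite on
all of `Q`, `I_Q` is strictly convex, and the isotropic state `b = 0` is its unique
critical point and global minimiser.  Here `Cov b = ∫ a⊗a ρ_b dμ − b⊗b` is the covariance
matrix (the inverse Hessian of `ψ_s`), satisfying `Cov b ≤ ‖a‖_∞² I` in the Loewner
order, `gψ` is the gradient of `ψ_s` (vanishing at `0` since the constraint functions are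
orthogonal to constants), and `λ_max(K)` is encoded by the quadratic-form bound. -/
theorem meanField_global_stability {k : ℕ}
    (Q : Set (EuclideanSpace ℝ (Fin k)))
    (hQo : IsOpen Q) (hQc : Convex ℝ Q) (hQb : Bornology.IsBounded Q)
    (h0Q : (0 : EuclideanSpace ℝ (Fin k)) ∈ Q)
    (ψ : EuclideanSpace ℝ (Fin k) → ℝ)
    (gψ : EuclideanSpace ℝ (Fin k) → EuclideanSpace ℝ (Fin k))
    (hψd : ∀ b ∈ Q, HasGradientAt ψ (gψ b) b)
    (hgψ0 : gψ 0 = 0)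
    (Cov : EuclideanSpace ℝ (Fin k) → Matrix (Fin k) (Fin k) ℝ)
    (hCovPD : ∀ b ∈ Q, (Cov b).PosDef)
    (hHess : ∀ b ∈ Q, HasFDerivAt gψ
      ((Matrix.toEuclideanCLM (𝕜 := ℝ) ((Cov b)⁻¹) :
        EuclideanSpace ℝ (Fin k) →L[ℝ] EuclideanSpace ℝ (Fin k))) b)
    (M : ℝ) (hM : 0 ≤ M)
    (hCovle : ∀ b ∈ Q, ∀ x : EuclideanSpace ℝ (Fin k),
      ⟪Matrix.toEuclideanCLM (𝕜 := ℝ) (Cov b) x, x⟫ ≤ M ^ 2 * ‖x‖ ^ 2)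
    (K : Matrix (Fin k) (Fin k) ℝ) (hKsymm : K.IsSymm) (hKpsd : K.PosSemidef)
    (lmax : ℝ)
    (hlmax : ∀ x : EuclideanSpace ℝ (Fin k),
      ⟪Matrix.toEuclideanCLM (𝕜 := ℝ) K x, x⟫ ≤ lmax * ‖x‖ ^ 2)
    (T : ℝ) (hT0 : 0 < T) (hT : M ^ 2 * lmax < T) :
    let IQ : EuclideanSpace ℝ (Fin k) → ℝ :=
      fun b => T * ψ b - (1 / 2) * ⟪Matrix.toEuclideanCLM (𝕜 := ℝ) K b, b⟫
    (∀ b ∈ Q, (T • (Cov b)⁻¹ - K).PosDef) ∧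
    StrictConvexOn ℝ Q IQ ∧
    (∀ b ∈ Q, T • gψ b - Matrix.toEuclideanCLM (𝕜 := ℝ) K b = 0 → b = 0) ∧
    (∀ b ∈ Q, IQ 0 ≤ IQ b) :=
  meanField_global_stability_general Q hQc h0Q ψ gψ hψd hgψ0 Cov hCovPD hHess M hCovle K hKsymm lmax
    hlmax T hT0 hT
end

section
/- Let g : Q → ℝ be Lipschitz with constant L, ψ_s convex and C¹ on the bounded open convex set Q with |∇ψ_s(b)| → ∞ as b → ∂Q, K_M = {b ∈ Q : ψ_s(b) ≤ M}, and P_M the nearest-point projection onto the closed convex set K_M. Then there exists M₀ ∈ ℝ such that for all M > M₀ and all b ∈ Q, ψ_s(b) + g(b) ≥ ψ_s(P_M b) + g(P_M b). -/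
/-!
If `ψ b ≤ M` the projection fixes `b`. Otherwise `p = P M b` lies on the level set `ψ = M`,
which for `M` large stays within `δ` of `∂Q`, where `‖∇ψ‖ ≥ L`. The vector `b - p` is an outward
normal of the sublevel set at `p`, hence a nonnegative multiple of `∇ψ p`, so convexity gives
`ψ b - ψ p ≥ ⟪∇ψ p, b - p⟫ = ‖∇ψ p‖ ‖b - p‖ ≥ L ‖b - p‖ ≥ g p - g b`.
-/

open Filter Topology Metric
open scoped RealInnerProductSpace

lemma IsOpen.isCompact_setOf_le_infDist_frontier {X : Type*} [MetricSpace X] [ProperSpace X]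
    {Q : Set X} (ho : IsOpen Q) (hbd : Bornology.IsBounded Q) {δ : ℝ} (hδ : 0 < δ) :
    IsCompact {x ∈ Q | δ ≤ infDist x (frontier Q)} := by
  have hclosure : {x ∈ Q | δ ≤ infDist x (frontier Q)} =
      closure Q ∩ {x | δ ≤ infDist x (frontier Q)} := by
    refine Set.Subset.antisymm (fun x hx => ⟨subset_closure hx.1, hx.2⟩) ?_
    rintro x ⟨hcl, hδx⟩
    refine ⟨by_contra fun hxQ => ?_, hδx⟩
    have hfr : x ∈ frontier Q := ⟨hcl, by rwa [ho.interior_eq]⟩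
    linarith [infDist_zero_of_mem hfr, show δ ≤ infDist x (frontier Q) from hδx]
  rw [hclosure]
  exact isCompact_of_isClosed_isBounded
    (isClosed_closure.inter (isClosed_le continuous_const (continuous_infDist_pt _)))
    (hbd.closure.subset Set.inter_subset_left)

section NormedSpace

variable {E : Type*} [NormedAddCommGroup E] [NormedSpace ℝ E]

lemma IsMinOn.eq_of_mem_nhds {K : Set E} {b p : E} (hmin : IsMinOn (fun y => ‖b - y‖) K p)
    (hK : K ∈ 𝓝 p) : p = b := by
  have hline : Tendsto (AffineMap.lineMap p b : ℝ → E) (𝓝[>] 0) (𝓝 p) := by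
    simpa using (AffineMap.lineMap_continuous.tendsto (0:ℝ)).mono_left nhdsWithin_le_nhds
  obtain ⟨t, htK, ht⟩ := ((hline.eventually hK).and (Ioo_mem_nhdsGT one_pos)).exists
  have hle : ‖b - p‖ ≤ (1 - t) * ‖b - p‖ := by
    simpa [← dist_eq_norm, dist_comm b, dist_lineMap_right, Real.dist_eq,
      abs_of_pos (sub_pos.2 ht.2)] using hmin htK
  have : ‖b - p‖ = 0 := by nlinarith [norm_nonneg (b - p), ht.1]
  exact (sub_eq_zero.1 (norm_eq_zero.1 this)).symm

end NormedSpace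

section InnerProductSpace

variable {E : Type*} [NormedAddCommGroup E] [InnerProductSpace ℝ E]

lemma norm_mul_norm_le_inner_of_forall_inner_pos {G n : E}
    (h : ∀ v, 0 < ⟪n, v⟫ → 0 ≤ ⟪G, v⟫) : ‖G‖ * ‖n‖ ≤ ⟪G, n⟫ := by
  by_contra! hlt
  have hCS : ⟪G, n⟫ ≤ ‖G‖ * ‖n‖ := real_inner_le_norm G n
  have hn : 0 < ‖n‖ := by
    refine (norm_nonneg n).lt_of_ne fun hn => ?_
    rw [← hn, norm_eq_zero.1 hn.symm, inner_zero_right] at hlt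
    simp at hlt
  have hG : 0 < ‖G‖ := by
    refine (norm_nonneg G).lt_of_ne fun hG => ?_
    rw [← hG, norm_eq_zero.1 hG.symm, inner_zero_left] at hlt
    simp at hlt
  -- `‖G‖ n - ‖n‖ G` points into the open half-space of `n` and strictly away from `G`.
  have key := h (‖G‖ • n - ‖n‖ • G)
  simp only [inner_sub_right, real_inner_smul_right, real_inner_self_eq_norm_sq,
    real_inner_comm G n] at key
  nlinarith [mul_pos hn hG, key (by nlinarith)]

lemma IsMinOn.real_inner_sub_nonpos {K : Set E} (hK : Convex ℝ K) {b p : E} (hp : p ∈ K)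
    (hmin : IsMinOn (fun y => ‖b - y‖) K p) : ∀ y ∈ K, ⟪b - p, y - p⟫ ≤ 0 :=
  (norm_eq_iInf_iff_real_inner_le_zero hK hp).1 (hmin.iInf_eq hp).symm

variable [CompleteSpace E] {ψ : E → ℝ} {G p : E}

lemma HasGradientAt.inner_nonneg_of_frequently_le (hψ : HasGradientAt ψ G p) {v : E}
    (h : ∃ᶠ t in 𝓝[>] (0:ℝ), ψ p ≤ ψ (p + t • v)) : 0 ≤ ⟪G, v⟫ :=
  (IsMinOn.localize (s := {y | ψ p ≤ ψ y}) fun _ hy => hy).hasFDerivWithinAt_nonneg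
    hψ.hasFDerivAt.hasFDerivWithinAt (mem_posTangentConeAt_of_frequently_mem h)

lemma ConvexOn.inner_le_of_hasGradientAt {s : Set E} {b : E} (hψ : ConvexOn ℝ s ψ) (hp : p ∈ s)
    (hb : b ∈ s) (hG : HasGradientAt ψ G p) : ⟪G, b - p⟫ ≤ ψ b - ψ p := by
  have hline := hψ.comp_affineMap (AffineMap.lineMap p b : ℝ →ᵃ[ℝ] E)
  have hderiv : HasDerivAt (ψ ∘ (AffineMap.lineMap p b : ℝ → E)) ⟪G, b - p⟫ 0 :=
    hG.hasFDerivAt.comp_hasDerivAt_of_eq 0 AffineMap.hasDerivAt_lineMap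
      (AffineMap.lineMap_apply_zero p b).symm
  simpa [slope_def_field] using
    hline.le_slope_of_hasDerivAt (x := 0) (y := 1) (by simpa) (by simpa) zero_lt_one hderiv

lemma HasGradientAt.norm_mul_norm_le_inner_of_normal {K : Set E} {n : E}
    (hψ : HasGradientAt ψ G p) (hN : ∀ y ∈ K, ⟪n, y - p⟫ ≤ 0)
    (hK : ∀ᶠ y in 𝓝 p, ψ y ≤ ψ p → y ∈ K) : ‖G‖ * ‖n‖ ≤ ⟪G, n⟫ := by
  refine norm_mul_norm_le_inner_of_forall_inner_pos fun v hv => hψ.inner_nonneg_of_frequently_le ?_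
  have hray : Tendsto (fun t : ℝ => p + t • v) (𝓝[>] 0) (𝓝 p) := by
    have hcont : Continuous fun t : ℝ => p + t • v := by fun_prop
    simpa using (hcont.tendsto 0).mono_left nhdsWithin_le_nhds
  refine Eventually.frequently (((hray.eventually hK).and self_mem_nhdsWithin).mono
    fun t ⟨htK, ht⟩ => ?_)
  by_contra! hlt
  have := hN _ (htK hlt.le)
  rw [add_sub_cancel_left, real_inner_smul_right] at this
  nlinarith [(ht : (0:ℝ) < t)]

lemma ConvexOn.norm_mul_norm_sub_le_of_isMinOn {s : Set E} {b : E} {M : ℝ}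
    (hψ : ConvexOn ℝ s ψ) (hs : IsOpen s) (hG : HasGradientAt ψ G p) (hb : b ∈ s)
    (hp : p ∈ {y ∈ s | ψ y ≤ M}) (hmin : IsMinOn (fun y => ‖b - y‖) {y ∈ s | ψ y ≤ M} p) :
    ‖G‖ * ‖b - p‖ ≤ ψ b - ψ p :=
  calc ‖G‖ * ‖b - p‖ ≤ ⟪G, b - p⟫ :=
        hG.norm_mul_norm_le_inner_of_normal (hmin.real_inner_sub_nonpos (hψ.convex_le M) hp) <| by
          filter_upwards [hs.mem_nhds hp.1] with y hy hψy using ⟨hy, hψy.trans hp.2⟩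
    _ ≤ ψ b - ψ p := hψ.inner_le_of_hasGradientAt hp.1 hb hG

end InnerProductSpace

theorem projection_decreases_energy_general {k : ℕ}
    (Q : Set (EuclideanSpace ℝ (Fin k))) (hne : Q.Nonempty)
    (hbd : Bornology.IsBounded Q) (ho : IsOpen Q)
    (ψ : EuclideanSpace ℝ (Fin k) → ℝ) (hψconv : ConvexOn ℝ Q ψ)
    (gψ : EuclideanSpace ℝ (Fin k) → EuclideanSpace ℝ (Fin k))
    (hψd : ∀ b ∈ Q, HasGradientAt ψ (gψ b) b)
    (hblow : ∀ M : ℝ, ∃ δ : ℝ, 0 < δ ∧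
      ∀ b ∈ Q, Metric.infDist b (frontier Q) ≤ δ → M ≤ ‖gψ b‖)
    (g : EuclideanSpace ℝ (Fin k) → ℝ) (L : ℝ)
    (hg : ∀ x ∈ Q, ∀ y ∈ Q, |g x - g y| ≤ L * ‖x - y‖)
    (P : ℝ → EuclideanSpace ℝ (Fin k) → EuclideanSpace ℝ (Fin k))
    (hP : ∀ M : ℝ, ∀ b ∈ Q, ({y ∈ Q | ψ y ≤ M}).Nonempty →
      (P M b ∈ Q ∧ ψ (P M b) ≤ M) ∧ ∀ y ∈ Q, ψ y ≤ M → ‖b - P M b‖ ≤ ‖b - y‖) :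
    ∃ M₀ : ℝ, ∀ M : ℝ, M₀ < M → ∀ b ∈ Q,
      ψ (P M b) + g (P M b) ≤ ψ b + g b := by
  obtain ⟨b₀, hb₀⟩ := hne
  obtain ⟨δ, hδ, hgrad⟩ := hblow L
  obtain ⟨C, hC⟩ := (ho.isCompact_setOf_le_infDist_frontier hbd hδ).bddAbove_image
    fun x hx => (hψd x hx.1).continuousAt.continuousWithinAt
  refine ⟨max (ψ b₀) C, fun M hM b hb => ?_⟩
  obtain ⟨hpK, hmin⟩ := hP M b hb ⟨b₀, hb₀, (le_max_left _ _).trans hM.le⟩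
  set p := P M b
  have hproj : IsMinOn (fun y => ‖b - y‖) {y ∈ Q | ψ y ≤ M} p := fun y hy => hmin y hy.1 hy.2
  rcases eq_or_ne p b with hpb | hpb
  · rw [hpb]
  have hψp : ψ p = M := hpK.2.eq_of_not_lt fun hlt => hpb <| hproj.eq_of_mem_nhds <| by
      filter_upwards [ho.mem_nhds hpK.1,
        (hψd p hpK.1).continuousAt.eventually_lt continuousAt_const hlt] with y hyQ hyM
      exact ⟨hyQ, hyM.le⟩
  have hsteep : L ≤ ‖gψ p‖ := hgrad p hpK.1 <| by
    by_contra! hfar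
    linarith [hC (Set.mem_image_of_mem ψ ⟨hpK.1, hfar.le⟩), le_max_right (ψ b₀) C]
  have hdecrease := hψconv.norm_mul_norm_sub_le_of_isMinOn ho (hψd p hpK.1) hb hpK hproj
  have hlip : g p - g b ≤ L * ‖b - p‖ := by
    simpa [norm_sub_rev] using (le_abs_self _).trans (hg p hpK.1 b hb)
  nlinarith [norm_nonneg (b - p)]

/-- Projection lemma: if `g` is Lipschitz with constant `L` on `Q`, `ψ_s` is convex and
`C¹` on the bounded open convex set `Q` with `|∇ψ_s(b)| → ∞` as `b → ∂Q`,
`K_M = {b ∈ Q : ψ_s(b) ≤ M}` and `P M` is the nearest-point projection onto `K_M`, then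
there exists `M₀` such that for all `M > M₀` and `b ∈ Q`,
`ψ_s(b) + g(b) ≥ ψ_s(P M b) + g(P M b)`. -/
theorem projection_decreases_energy {k : ℕ}
    (Q : Set (EuclideanSpace ℝ (Fin k))) (hne : Q.Nonempty)
    (hbd : Bornology.IsBounded Q) (ho : IsOpen Q) (hc : Convex ℝ Q)
    (ψ : EuclideanSpace ℝ (Fin k) → ℝ) (hψconv : ConvexOn ℝ Q ψ)
    (gψ : EuclideanSpace ℝ (Fin k) → EuclideanSpace ℝ (Fin k))
    (hψd : ∀ b ∈ Q, HasGradientAt ψ (gψ b) b)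
    (hψdc : ContinuousOn gψ Q)
    (hblow : ∀ M : ℝ, ∃ δ : ℝ, 0 < δ ∧
      ∀ b ∈ Q, Metric.infDist b (frontier Q) ≤ δ → M ≤ ‖gψ b‖)
    (g : EuclideanSpace ℝ (Fin k) → ℝ) (L : ℝ) (hL : 0 ≤ L)
    (hg : ∀ x ∈ Q, ∀ y ∈ Q, |g x - g y| ≤ L * ‖x - y‖)
    (P : ℝ → EuclideanSpace ℝ (Fin k) → EuclideanSpace ℝ (Fin k))
    (hP : ∀ M : ℝ, ∀ b ∈ Q, ({y ∈ Q | ψ y ≤ M}).Nonempty →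
      (P M b ∈ Q ∧ ψ (P M b) ≤ M) ∧ ∀ y ∈ Q, ψ y ≤ M → ‖b - P M b‖ ≤ ‖b - y‖) :
    ∃ M₀ : ℝ, ∀ M : ℝ, M₀ < M → ∀ b ∈ Q,
      ψ (P M b) + g (P M b) ≤ ψ b + g b :=
  projection_decreases_energy_general Q hne hbd ho ψ hψconv gψ hψd hblow g L hg P hP
end
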